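/- arXiv:0904.1551 — 11 statements merged into one kernel-verified Lean document; each statement's English description precedes it below -/
import Mathlib

section
/- Let H be a finite nonempty set, let W_a > 0 and V_a > 0 be real numbers for each a ∈ H, and set W = Σ_{a∈H} W_a and V = Σ_{a∈H} V_a. Then for any vectors x_a ∈ ℝ^m (a ∈ H), |W^{-1} Σ_{a∈H} W_a x_a − V^{-1} Σ_{a∈H} V_a x_a| ≤ (max_{a,b∈H} |x_a − x_b|) · (1 − (min_{a∈H} V_a/W_a)/(max_{a∈H} V_a/W_a)). -/
/-!
With `p a = W a / ∑ W` and `q a = V a / ∑ V`, the left side is `‖∑ (p a - q a) • x a‖`.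
Writing `m, M` for the minimum and maximum of `V a / W a` and `t = m / M`, one has
`q ≥ t • p` pointwise, so `p - q = (1 - t) • p - (q - t • p)` is a difference of two nonnegative
weight vectors of the same total mass `1 - t`. Coupling them, `∑ (p a - q a) • x a` is `1 - t`
times an average of the differences `x a - x b`, each of norm at most `max ‖x a - x b‖`.
-/

open Finset

theorem div_mul_div_sum_le_div_sum {ι : Type*} [Fintype ι] [Nonempty ι] {W V : ι → ℝ}
    (hW : ∀ a, 0 < W a) (hV : ∀ a, 0 < V a) {m M : ℝ} (hm : ∀ a, m ≤ V a / W a) (hM : ∀ a, V a / W a ≤ M)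
    (a : ι) : m / M * (W a / ∑ b, W b) ≤ V a / ∑ b, V b := by
  have hSW : 0 < ∑ b, W b := sum_pos (fun b _ => hW b) univ_nonempty
  have hSV : 0 < ∑ b, V b := sum_pos (fun b _ => hV b) univ_nonempty
  have hmW : m * W a ≤ V a := (le_div_iff₀ (hW a)).1 (hm a)
  have hVM : ∑ b, V b ≤ M * ∑ b, W b := by
    rw [mul_sum]
    exact sum_le_sum fun b _ => (div_le_iff₀ (hW b)).1 (hM b)
  calc m / M * (W a / ∑ b, W b) = m * W a / (M * ∑ b, W b) := by
        rw [div_mul_div_comm]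
    _ ≤ V a / ∑ b, V b := div_le_div₀ (hV a).le hmW hSV hVM

section

variable {ι E : Type*} [Fintype ι] [SeminormedAddCommGroup E] [NormedSpace ℝ E]

theorem smul_sub_eq_sum_sum_mul_smul_sub {α β : ι → ℝ} (hαβ : ∑ a, α a = ∑ a, β a)
    (x : ι → E) :
    (∑ a, α a) • (∑ a, α a • x a - ∑ a, β a • x a) =
      ∑ a, ∑ b, (α a * β b) • (x a - x b) := by
  simp only [smul_sub, sum_sub_distrib, smul_sum, smul_smul]
  congr 1
  · refine sum_congr rfl fun a _ => ?_
    rw [← sum_smul, ← mul_sum, hαβ, mul_comm]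
  · rw [sum_comm]
    refine sum_congr rfl fun b _ => ?_
    rw [← sum_smul, ← sum_mul]

theorem norm_sum_smul_sub_sum_smul_le {α β : ι → ℝ} (hα : ∀ a, 0 ≤ α a) (hβ : ∀ a, 0 ≤ β a)
    (hαβ : ∑ a, α a = ∑ a, β a) {x : ι → E} {D : ℝ} (hD : ∀ a b, ‖x a - x b‖ ≤ D) :
    ‖∑ a, α a • x a - ∑ a, β a • x a‖ ≤ (∑ a, α a) * D := by
  rcases (sum_nonneg fun a _ => hα a : 0 ≤ ∑ a, α a).eq_or_lt with hs | hs
  · have hα0 : ∀ a, α a = 0 := fun a =>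
      (sum_eq_zero_iff_of_nonneg fun a _ => hα a).mp hs.symm a (mem_univ a)
    have hβ0 : ∀ a, β a = 0 := fun a =>
      (sum_eq_zero_iff_of_nonneg fun a _ => hβ a).mp (hαβ ▸ hs.symm) a (mem_univ a)
    simp [hα0, hβ0]
  set s := ∑ a, α a
  have hcoupling : s * ‖∑ a, α a • x a - ∑ a, β a • x a‖ ≤ s * (s * D) :=
    calc s * ‖∑ a, α a • x a - ∑ a, β a • x a‖
        = ‖∑ a, ∑ b, (α a * β b) • (x a - x b)‖ := by
          rw [← smul_sub_eq_sum_sum_mul_smul_sub hαβ, norm_smul, Real.norm_of_nonneg hs.le]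
      _ ≤ ∑ a, ∑ b, α a * β b * D := by
          refine (norm_sum_le _ _).trans (sum_le_sum fun a _ => ?_)
          refine (norm_sum_le _ _).trans (sum_le_sum fun b _ => ?_)
          rw [norm_smul, Real.norm_of_nonneg (mul_nonneg (hα a) (hβ b))]
          exact mul_le_mul_of_nonneg_left (hD a b) (mul_nonneg (hα a) (hβ b))
      _ = s * (s * D) := by
          simp only [mul_assoc, ← mul_sum, ← sum_mul, ← hαβ, s]
  exact le_of_mul_le_mul_left hcoupling hs

theorem norm_sum_smul_sub_sum_smul_le_of_mul_le {p q : ι → ℝ} {t : ℝ} (hp : ∀ a, 0 ≤ p a)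
    (hp1 : ∑ a, p a = 1) (hq1 : ∑ a, q a = 1) (hpq : ∀ a, t * p a ≤ q a)
    {x : ι → E} {D : ℝ} (hD : ∀ a b, ‖x a - x b‖ ≤ D) :
    ‖∑ a, p a • x a - ∑ a, q a • x a‖ ≤ (1 - t) * D := by
  have ht : t ≤ 1 := by
    simpa [← mul_sum, hp1, hq1] using sum_le_sum fun a (_ : a ∈ univ) => hpq a
  have hmass : ∑ a, (1 - t) * p a = ∑ a, (q a - t * p a) := by
    simp only [← mul_sum, sum_sub_distrib, hp1, hq1, mul_one]
  have hsplit : ∑ a, p a • x a - ∑ a, q a • x a =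
      ∑ a, ((1 - t) * p a) • x a - ∑ a, (q a - t * p a) • x a := by
    simp only [sub_smul, mul_smul, one_smul, sum_sub_distrib, ← smul_sum]
    abel
  rw [hsplit]
  convert norm_sum_smul_sub_sum_smul_le (fun a => mul_nonneg (sub_nonneg.2 ht) (hp a))
    (fun a => sub_nonneg.2 (hpq a)) hmass hD using 2
  rw [← mul_sum, hp1, mul_one]

end

/-- Let `H` be a finite nonempty set, `W a > 0`, `V a > 0` reals for
`a ∈ H`, `W = ∑ W a`, `V = ∑ V a`.  Then for any vectors `x a ∈ ℝ^m`,
`‖W⁻¹ ∑ W a • x a − V⁻¹ ∑ V a • x a‖ ≤ (max_{a,b} ‖x a − x b‖) ·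
  (1 − (min_a V a / W a) / (max_a V a / W a))`. -/
theorem stmt0 {H : Type*} [Fintype H] [Nonempty H] (m : ℕ)
    (W V : H → ℝ) (hW : ∀ a, 0 < W a) (hV : ∀ a, 0 < V a)
    (x : H → EuclideanSpace ℝ (Fin m)) :
    ‖(∑ a, W a)⁻¹ • ∑ a, W a • x a - (∑ a, V a)⁻¹ • ∑ a, V a • x a‖ ≤
      (Finset.univ.sup' Finset.univ_nonempty fun p : H × H => ‖x p.1 - x p.2‖) *
        (1 - (Finset.univ.inf' Finset.univ_nonempty fun a => V a / W a) /
          (Finset.univ.sup' Finset.univ_nonempty fun a => V a / W a)) := by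
  have hSW : 0 < ∑ a, W a := sum_pos (fun a _ => hW a) univ_nonempty
  have hSV : 0 < ∑ a, V a := sum_pos (fun a _ => hV a) univ_nonempty
  simp only [smul_sum, smul_smul, inv_mul_eq_div]
  rw [mul_comm]
  refine norm_sum_smul_sub_sum_smul_le_of_mul_le
    (fun a => div_nonneg (hW a).le hSW.le)
    (by rw [← sum_div, div_self hSW.ne']) (by rw [← sum_div, div_self hSV.ne'])
    (div_mul_div_sum_le_div_sum hW hV (fun a => inf'_le _ (mem_univ a))
      (fun a => le_sup' (fun a => V a / W a) (mem_univ a)))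
    (fun a b => le_sup' (fun p : H × H => ‖x p.1 - x p.2‖) (mem_univ (a, b)))
end

section
/- Let A and B be finite nonempty sets and let W_a > 0, V_a > 0, x_a > 0 be real numbers for each a ∈ A ∪ B. Then |(Σ_{b∈B} W_b x_b)/(Σ_{a∈A} W_a x_a) − (Σ_{b∈B} V_b x_b)/(Σ_{a∈A} V_a x_a)| ≤ #B · ((max_{b∈B} x_b)/(min_{a∈A} x_a)) · max_{a∈A, b∈B} |W_b/W_a − V_b/V_a|, where #B denotes the cardinality of B. -/
/-!
For each `b ∈ B`, writing `S_W = ∑_{a∈A} W_a x_a` and `S_V = ∑_{a∈A} V_a x_a`,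
`W_b S_V - S_W V_b = ∑_{a∈A} W_a V_a x_a (W_b/W_a - V_b/V_a)`, while
`(min_A x) · ∑_{a∈A} W_a V_a x_a ≤ ∑_{a∈A} (W_a x_a)(V_a x_a) ≤ S_W S_V`. Hence
`|W_b/S_W - V_b/S_V| ≤ max |W_b/W_a - V_b/V_a| / min_A x`, and summing against the weights
`x_b ≤ max_B x` gives the bound.
-/

open Finset

namespace Finset

variable {ι : Type*}

theorem sum_mul_le_sum_mul_sum (s : Finset ι) {f g : ι → ℝ} (hf : ∀ i ∈ s, 0 ≤ f i)
    (hg : ∀ i ∈ s, 0 ≤ g i) : ∑ i ∈ s, f i * g i ≤ (∑ i ∈ s, f i) * ∑ i ∈ s, g i := by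
  rw [sum_mul]
  exact sum_le_sum fun i hi => mul_le_mul_of_nonneg_left (single_le_sum hg hi) (hf i hi)

theorem mul_sum_sub_sum_mul_eq_sum (s : Finset ι) {W V : ι → ℝ} (x : ι → ℝ) (w v : ℝ)
    (hW : ∀ a ∈ s, W a ≠ 0) (hV : ∀ a ∈ s, V a ≠ 0) :
    w * (∑ a ∈ s, V a * x a) - (∑ a ∈ s, W a * x a) * v =
      ∑ a ∈ s, W a * V a * x a * (w / W a - v / V a) := by
  rw [mul_sum, sum_mul, ← sum_sub_distrib]
  refine sum_congr rfl fun a ha => ?_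
  field_simp [hW a ha, hV a ha]

theorem abs_div_sum_sub_div_sum_le {s : Finset ι} (hs : s.Nonempty) {W V x : ι → ℝ}
    {w v m M : ℝ} (hW : ∀ a ∈ s, 0 < W a) (hV : ∀ a ∈ s, 0 < V a) (hx : ∀ a ∈ s, 0 < x a)
    (hm : 0 < m) (hmx : ∀ a ∈ s, m ≤ x a) (hM : ∀ a ∈ s, |w / W a - v / V a| ≤ M) :
    |w / ∑ a ∈ s, W a * x a - v / ∑ a ∈ s, V a * x a| ≤ M / m := by
  set SW := ∑ a ∈ s, W a * x a
  set SV := ∑ a ∈ s, V a * x a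
  have hSW : 0 < SW := sum_pos (fun a ha => mul_pos (hW a ha) (hx a ha)) hs
  have hSV : 0 < SV := sum_pos (fun a ha => mul_pos (hV a ha) (hx a ha)) hs
  have hM0 : 0 ≤ M := (abs_nonneg _).trans (hM _ hs.choose_spec)
  have hWVx : ∀ a ∈ s, 0 ≤ W a * V a * x a := fun a ha =>
    (mul_pos (mul_pos (hW a ha) (hV a ha)) (hx a ha)).le
  have hdenom : m * ∑ a ∈ s, W a * V a * x a ≤ SW * SV :=
    calc m * ∑ a ∈ s, W a * V a * x a
        ≤ ∑ a ∈ s, W a * x a * (V a * x a) := by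
          rw [mul_sum]
          refine sum_le_sum fun a ha => ?_
          have := mul_le_mul_of_nonneg_left (hmx a ha) (hWVx a ha)
          linarith
      _ ≤ SW * SV := sum_mul_le_sum_mul_sum s
          (fun a ha => (mul_pos (hW a ha) (hx a ha)).le)
          (fun a ha => (mul_pos (hV a ha) (hx a ha)).le)
  calc |w / SW - v / SV|
      = |∑ a ∈ s, W a * V a * x a * (w / W a - v / V a)| / (SW * SV) := by
        rw [div_sub_div _ _ hSW.ne' hSV.ne', abs_div, abs_of_pos (mul_pos hSW hSV),
          mul_sum_sub_sum_mul_eq_sum s x w v (fun a ha => (hW a ha).ne')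
            (fun a ha => (hV a ha).ne')]
    _ ≤ M * (∑ a ∈ s, W a * V a * x a) / (SW * SV) := by
        gcongr
        refine (abs_sum_le_sum_abs _ _).trans ?_
        rw [mul_sum]
        refine sum_le_sum fun a ha => ?_
        rw [abs_mul, abs_of_nonneg (hWVx a ha), mul_comm M]
        exact mul_le_mul_of_nonneg_left (hM a ha) (hWVx a ha)
    _ ≤ M / m := by
        rw [div_le_div_iff₀ (mul_pos hSW hSV) hm, mul_assoc, mul_comm _ m]
        exact mul_le_mul_of_nonneg_left hdenom hM0

theorem abs_sum_mul_div_sub_sum_mul_div_le (s : Finset ι) {f g x : ι → ℝ} {S T X K : ℝ}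
    (hx : ∀ b ∈ s, 0 ≤ x b) (hxX : ∀ b ∈ s, x b ≤ X) (hK : ∀ b ∈ s, |f b / S - g b / T| ≤ K) :
    |(∑ b ∈ s, f b * x b) / S - (∑ b ∈ s, g b * x b) / T| ≤ s.card * X * K :=
  calc |(∑ b ∈ s, f b * x b) / S - (∑ b ∈ s, g b * x b) / T|
      = |∑ b ∈ s, x b * (f b / S - g b / T)| := by
        rw [sum_div, sum_div, ← sum_sub_distrib]
        congr 1
        exact sum_congr rfl fun b _ => by ring
    _ ≤ ∑ b ∈ s, X * K := by
        refine (abs_sum_le_sum_abs _ _).trans (sum_le_sum fun b hb => ?_)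
        rw [abs_mul, abs_of_nonneg (hx b hb)]
        exact mul_le_mul (hxX b hb) (hK b hb) (abs_nonneg _) ((hx b hb).trans (hxX b hb))
    _ = s.card * X * K := by rw [sum_const, nsmul_eq_mul, mul_assoc]

end Finset

/-- Let `A` and `B` be finite nonempty sets and `W a, V a, x a > 0`
for `a ∈ A ∪ B`.  Then
`|(∑_{b∈B} W b x b)/(∑_{a∈A} W a x a) − (∑_{b∈B} V b x b)/(∑_{a∈A} V a x a)|
  ≤ #B · ((max_{b∈B} x b)/(min_{a∈A} x a)) · max_{a∈A,b∈B} |W b / W a − V b / V a|`. -/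
theorem stmt1 {ι : Type*} [DecidableEq ι] (A B : Finset ι)
    (hA : A.Nonempty) (hB : B.Nonempty)
    (W V x : ι → ℝ)
    (hW : ∀ a ∈ A ∪ B, 0 < W a) (hV : ∀ a ∈ A ∪ B, 0 < V a)
    (hx : ∀ a ∈ A ∪ B, 0 < x a) :
    |(∑ b ∈ B, W b * x b) / (∑ a ∈ A, W a * x a) -
        (∑ b ∈ B, V b * x b) / (∑ a ∈ A, V a * x a)| ≤
      (B.card : ℝ) * ((B.sup' hB x) / (A.inf' hA x)) *
        ((A ×ˢ B).sup' (hA.product hB) fun p => |W p.2 / W p.1 - V p.2 / V p.1|) := by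
  set M := (A ×ˢ B).sup' (hA.product hB) fun p => |W p.2 / W p.1 - V p.2 / V p.1|
  set m := A.inf' hA x
  have hAU : ∀ a ∈ A, a ∈ A ∪ B := fun a ha => mem_union_left _ ha
  have hm : 0 < m := (lt_inf'_iff hA).2 fun a ha => hx a (hAU a ha)
  have hquot : ∀ b ∈ B,
      |W b / ∑ a ∈ A, W a * x a - V b / ∑ a ∈ A, V a * x a| ≤ M / m := fun b hb =>
    abs_div_sum_sub_div_sum_le hA (fun a ha => hW a (hAU a ha)) (fun a ha => hV a (hAU a ha))
      (fun a ha => hx a (hAU a ha)) hm (fun a ha => inf'_le x ha)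
      (fun a ha => le_sup' (fun p : ι × ι => |W p.2 / W p.1 - V p.2 / V p.1|)
        (mem_product.2 ⟨ha, hb⟩ : (a, b) ∈ A ×ˢ B))
  calc _ ≤ (B.card : ℝ) * B.sup' hB x * (M / m) :=
        abs_sum_mul_div_sub_sum_mul_div_le B (fun b hb => (hx b (mem_union_right _ hb)).le)
          (fun b hb => le_sup' x hb) hquot
    _ = _ := by ring
end

section
/- Let H be a finite nonempty linearly ordered set, and for each a ∈ H let W_a : ℝ^p → [0,∞) and g_a : ℝ^p → ℝ be differentiable, with W := Σ_{a∈H} W_a > 0 everywhere. Define ḡ = W^{-1} Σ_{a∈H} W_a g_a. Then for every coordinate direction k ∈ {1,…,p}, ∂_k ḡ = W^{-1} Σ_{a∈H} W_a ∂_k g_a + W^{-2} Σ_{a<b in H} (∂_k W_a · W_b − W_a · ∂_k W_b)(g_a − g_b). -/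
/-!
Write `S = ∑ₐ Wₐ` and `N = ∑ₐ Wₐ gₐ`. The quotient rule gives
`∂ₖ(N / S) = S⁻¹ ∂ₖN − S⁻² ∂ₖS · N` with `∂ₖN = ∑ₐ (Wₐ ∂ₖgₐ + gₐ ∂ₖWₐ)`, so it remains to see
`(∑ₐ gₐ ∂ₖWₐ) S − (∑ₐ ∂ₖWₐ) N = ∑_{a,b} ∂ₖWₐ W_b (gₐ − g_b)`. The summand vanishes on the
diagonal, and pairing `(a, b)` with `(b, a)` folds the double sum onto the pairs `a < b`.
-/

open Finset

theorem Finset.sum_filter_lt_add_swap {ι M : Type*} [Fintype ι] [LinearOrder ι]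
    [AddCommMonoid M] (F : ι → ι → M) (hF : ∀ a, F a a = 0) :
    ∑ q ∈ univ.filter (fun q : ι × ι => q.1 < q.2), (F q.1 q.2 + F q.2 q.1) =
      ∑ a, ∑ b, F a b := by
  have hswap : ∑ q ∈ univ.filter (fun q : ι × ι => q.1 < q.2), F q.2 q.1 =
      ∑ q ∈ univ.filter (fun q : ι × ι => q.2 < q.1), F q.1 q.2 :=
    sum_nbij' Prod.swap Prod.swap (by simp) (by simp) (by simp) (by simp) (by simp)
  have hsplit : ∀ q : ι × ι, F q.1 q.2 =
      (if q.1 < q.2 then F q.1 q.2 else 0) + (if q.2 < q.1 then F q.1 q.2 else 0) := by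
    rintro ⟨a, b⟩
    rcases lt_trichotomy a b with h | rfl | h
    · simp [h, h.not_gt]
    · simp [hF]
    · simp [h, h.not_gt]
  rw [sum_add_distrib, hswap, sum_filter, sum_filter, ← sum_add_distrib, ← Fintype.sum_prod_type']
  exact (sum_congr rfl fun q _ => hsplit q).symm

theorem Finset.sum_filter_lt_mul_sub_mul_mul_sub {ι R : Type*} [Fintype ι] [LinearOrder ι]
    [CommRing R] (u w g : ι → R) :
    ∑ q ∈ univ.filter (fun q : ι × ι => q.1 < q.2),
        (u q.1 * w q.2 - w q.1 * u q.2) * (g q.1 - g q.2) =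
      (∑ a, g a * u a) * ∑ a, w a - (∑ a, u a) * ∑ a, w a * g a := by
  calc _ = ∑ q ∈ univ.filter (fun q : ι × ι => q.1 < q.2),
          (u q.1 * w q.2 * (g q.1 - g q.2) + u q.2 * w q.1 * (g q.2 - g q.1)) :=
        sum_congr rfl fun q _ => by ring
    _ = ∑ a, ∑ b, u a * w b * (g a - g b) :=
        sum_filter_lt_add_swap (fun a b => u a * w b * (g a - g b)) (by simp)
    _ = _ := by
        rw [sum_mul_sum, sum_mul_sum, ← sum_sub_distrib]
        refine sum_congr rfl fun a _ => ?_
        rw [← sum_sub_distrib]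
        exact sum_congr rfl fun b _ => by ring

theorem fderiv_inv_mul_apply {𝕜 E : Type*} [NontriviallyNormedField 𝕜] [NormedAddCommGroup E]
    [NormedSpace 𝕜 E] {S N : E → 𝕜} {x : E} (hS : DifferentiableAt 𝕜 S x)
    (hN : DifferentiableAt 𝕜 N x) (hx : S x ≠ 0) (v : E) :
    fderiv 𝕜 (fun y => (S y)⁻¹ * N y) x v =
      (S x)⁻¹ * fderiv 𝕜 N x v - (S x ^ 2)⁻¹ * (fderiv 𝕜 S x v * N x) := by
  have h : HasFDerivAt (fun y => (S y)⁻¹ * N y) _ x :=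
    ((hasDerivAt_inv hx).comp_hasFDerivAt x hS.hasFDerivAt).fun_mul hN.hasFDerivAt
  rw [h.fderiv]
  simp only [add_apply, smul_apply, smul_eq_mul, Function.comp_apply]
  ring

theorem stmt2_general {H : Type*} [Fintype H] [LinearOrder H] (p : ℕ)
    (W g : H → (Fin p → ℝ) → ℝ)
    (hWd : ∀ a, Differentiable ℝ (W a)) (hgd : ∀ a, Differentiable ℝ (g a))
    (hWpos : ∀ x, 0 < ∑ a, W a x) (k : Fin p) (x : Fin p → ℝ) :
    fderiv ℝ (fun y => (∑ a, W a y)⁻¹ * ∑ a, W a y * g a y) x (Pi.single k 1) =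
      (∑ a, W a x)⁻¹ * (∑ a, W a x * fderiv ℝ (g a) x (Pi.single k 1)) +
        ((∑ a, W a x) ^ 2)⁻¹ *
          ∑ q ∈ Finset.univ.filter (fun q : H × H => q.1 < q.2),
            (fderiv ℝ (W q.1) x (Pi.single k 1) * W q.2 x -
                W q.1 x * fderiv ℝ (W q.2) x (Pi.single k 1)) * (g q.1 x - g q.2 x) := by
  have hS : DifferentiableAt ℝ (fun y => ∑ a, W a y) x := by fun_prop
  have hN : DifferentiableAt ℝ (fun y => ∑ a, W a y * g a y) x := by fun_prop
  have hx : ∑ a, W a x ≠ 0 := (hWpos x).ne'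
  rw [fderiv_inv_mul_apply hS hN hx, fderiv_fun_sum fun a _ => (hWd a x),
    fderiv_fun_sum (A := fun a y => W a y * g a y) fun a _ => (hWd a x).mul (hgd a x),
    sum_filter_lt_mul_sub_mul_mul_sub (fun a => fderiv ℝ (W a) x (Pi.single k 1)) (W · x) (g · x)]
  simp only [_root_.sum_apply, fderiv_fun_mul (hWd _ x) (hgd _ x), add_apply, smul_apply,
    smul_eq_mul, sum_add_distrib]
  field_simp
  ring

/-- Let `H` be a finite nonempty linearly ordered set, and for each
`a ∈ H` let `W a : ℝ^p → [0,∞)` and `g a : ℝ^p → ℝ` be differentiable, with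
`W = ∑_a W a > 0` everywhere.  Define `ḡ = W⁻¹ ∑_a W a · g a`.  Then for every
coordinate direction `k`,
`∂ₖ ḡ = W⁻¹ ∑_a W a ∂ₖ g a + W⁻² ∑_{a<b} (∂ₖ W a · W b − W a · ∂ₖ W b)(g a − g b)`. -/
theorem stmt2 {H : Type*} [Fintype H] [Nonempty H] [LinearOrder H] (p : ℕ)
    (W g : H → (Fin p → ℝ) → ℝ)
    (hW0 : ∀ a x, 0 ≤ W a x)
    (hWd : ∀ a, Differentiable ℝ (W a)) (hgd : ∀ a, Differentiable ℝ (g a))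
    (hWpos : ∀ x, 0 < ∑ a, W a x) (k : Fin p) (x : Fin p → ℝ) :
    fderiv ℝ (fun y => (∑ a, W a y)⁻¹ * ∑ a, W a y * g a y) x (Pi.single k 1) =
      (∑ a, W a x)⁻¹ * (∑ a, W a x * fderiv ℝ (g a) x (Pi.single k 1)) +
        ((∑ a, W a x) ^ 2)⁻¹ *
          ∑ q ∈ Finset.univ.filter (fun q : H × H => q.1 < q.2),
            (fderiv ℝ (W q.1) x (Pi.single k 1) * W q.2 x -
                W q.1 x * fderiv ℝ (W q.2) x (Pi.single k 1)) * (g q.1 x - g q.2 x) :=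
  stmt2_general p W g hWd hgd hWpos k x
end

section
/- Let H be a finite nonempty linearly ordered set, p ≥ 1, q ≥ 1, and let ν be a p-dimensional multi-index with 1 ≤ |ν| ≤ q. There exist real constants c_{k,ν}(a_1,…,a_k, i_1,…,i_k), indexed over k = 2,…,|ν|+1, tuples a_1,…,a_k ∈ H with a_1 < a_2, multi-indices j with 0 ≤ j < ν and i_1,…,i_k ≥ 0 with i_1+⋯+i_k = ν − j, depending only on these indices (not on the functions below), such that: for all q-times differentiable functions W_a : ℝ^p → [0,∞) and g_a : ℝ^p → ℝ (a ∈ H) with W := Σ_a W_a > 0 everywhere, the function ḡ = W^{-1} Σ_a W_a g_a satisfies ḡ^{(ν)} = W^{-1} Σ_a W_a g_a^{(ν)} + Σ_{k=2}^{|ν|+1} Σ_{0 ≤ j < ν} W^{-k} U_{k,ν,j}, where U_{k,ν,j} = Σ c_{k,ν}(a_1,…,a_k, i_1,…,i_k) · (∏_{s=1}^k W_{a_s}^{(i_s)}) · (g_{a_1}^{(j)} − g_{a_2}^{(j)}), the inner sum running over a_1,…,a_k ∈ H with a_1 < a_2 and i_1+⋯+i_k = ν − j. -/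
/-!
Write `ḡ = W⁻¹ ∑ₐ Wₐ gₐ`. The quotient rule gives
`∂ₜ ḡ = W⁻¹ ∑ₐ Wₐ ∂ₜ gₐ + W⁻² ∑ₐ ∑_b W_b ∂ₜWₐ (gₐ - g_b)`, and the diagonal of the double sum
vanishes, so it only involves pairs `a < b`. Adding one derivative at a time, in the smallest
coordinate of the multi-index (so that `mderiv` peels off as an outer partial derivative), the
remainder `ḡ^(ν) - W⁻¹ ∑ₐ Wₐ gₐ^(ν)` therefore stays in the span of the terms
`W^-(k+2) ∏ₛ W_{aₛ}^(iₛ) (g_{a₀}^(j) - g_{a₁}^(j))`: differentiating such a term raises the power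
of `W` and appends a factor `∂ₜW_b`, or differentiates one factor `W_{aₛ}^(iₛ)`, or raises `j`.
The span is taken in the space of functionals of the family `(W, g)`, so the coefficients do not
depend on it.
-/

/-- The partial derivative in the `k`-th coordinate direction of a function `ℝ^p → ℝ`. -/
noncomputable def pderiv (p : ℕ) (k : Fin p) (f : (Fin p → ℝ) → ℝ) : (Fin p → ℝ) → ℝ :=
  fun x => fderiv ℝ f x (Pi.single k 1)

/-- For a multi-index `ν : Fin p → ℕ`, `mderiv p ν f` is the partial derivative
`∂^{|ν|} f / ∂x_1^{ν 1} ⋯ ∂x_p^{ν p}`, obtained by applying the `k`-th partial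
derivative `ν k` times, for each coordinate `k`. -/
noncomputable def mderiv (p : ℕ) (ν : Fin p → ℕ) (f : (Fin p → ℝ) → ℝ) :
    (Fin p → ℝ) → ℝ :=
  ((List.finRange p).foldr (fun k acc => (pderiv p k)^[ν k] ∘ acc) id) f

section PartialDerivative

variable {p : ℕ} {t : Fin p} {f g : (Fin p → ℝ) → ℝ} {x : Fin p → ℝ}

theorem pderiv_add (hf : DifferentiableAt ℝ f x) (hg : DifferentiableAt ℝ g x) :
    pderiv p t (fun y => f y + g y) x = pderiv p t f x + pderiv p t g x := by
  simp only [pderiv, fderiv_fun_add hf hg, add_apply]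

theorem pderiv_sub (hf : DifferentiableAt ℝ f x) (hg : DifferentiableAt ℝ g x) :
    pderiv p t (fun y => f y - g y) x = pderiv p t f x - pderiv p t g x := by
  simp only [pderiv, fderiv_fun_sub hf hg, sub_apply]

theorem pderiv_mul (hf : DifferentiableAt ℝ f x) (hg : DifferentiableAt ℝ g x) :
    pderiv p t (fun y => f y * g y) x = pderiv p t f x * g x + f x * pderiv p t g x := by
  simp only [pderiv, fderiv_fun_mul hf hg, add_apply, smul_apply, smul_eq_mul]
  ring

theorem pderiv_const_mul (c : ℝ) (hf : DifferentiableAt ℝ f x) :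
    pderiv p t (fun y => c * f y) x = c * pderiv p t f x := by
  simp only [pderiv, fderiv_const_mul hf c, smul_apply, smul_eq_mul]

theorem pderiv_sum {ι : Type*} (s : Finset ι) {F : ι → (Fin p → ℝ) → ℝ}
    (hF : ∀ i ∈ s, DifferentiableAt ℝ (F i) x) :
    pderiv p t (fun y => ∑ i ∈ s, F i y) x = ∑ i ∈ s, pderiv p t (F i) x := by
  simp only [pderiv, fderiv_fun_sum hF, sum_apply]

theorem pderiv_prod {ι : Type*} [DecidableEq ι] (s : Finset ι) {F : ι → (Fin p → ℝ) → ℝ}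
    (hF : ∀ i ∈ s, DifferentiableAt ℝ (F i) x) :
    pderiv p t (fun y => ∏ i ∈ s, F i y) x
      = ∑ i ∈ s, (∏ j ∈ s.erase i, F j x) * pderiv p t (F i) x := by
  simp only [pderiv, fderiv_finsetProd hF, sum_apply, smul_apply, smul_eq_mul]

theorem pderiv_inv_pow (m : ℕ) (hf : DifferentiableAt ℝ f x) (hfx : f x ≠ 0) :
    pderiv p t (fun y => (f y ^ m)⁻¹) x = -m * (f x ^ (m + 1))⁻¹ * pderiv p t f x := by
  have hcomp : (fun y => (f y ^ m)⁻¹) = Inv.inv ∘ fun y => f y ^ m := rfl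
  rw [pderiv, hcomp, fderiv_comp x (differentiableAt_inv (pow_ne_zero m hfx)) (hf.fun_pow m),
    fderiv_inv, fderiv_fun_pow m hf]
  simp only [ContinuousLinearMap.comp_apply, smul_apply, ContinuousLinearMap.toSpanSingleton_apply,
    smul_eq_mul, nsmul_eq_mul]
  rcases m with _ | m
  · simp
  · field_simp
    simp only [Nat.add_sub_cancel, pderiv]
    ring

theorem pderiv_inv (hf : DifferentiableAt ℝ f x) (hfx : f x ≠ 0) :
    pderiv p t (fun y => (f y)⁻¹) x = -(f x ^ 2)⁻¹ * pderiv p t f x := by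
  simpa using pderiv_inv_pow (t := t) 1 hf hfx

end PartialDerivative

section MultiIndex

variable {p : ℕ} {t : Fin p} {μ ν : Fin p → ℕ}

theorem sum_add_single_one (μ : Fin p → ℕ) (t : Fin p) :
    ∑ k, (μ + Pi.single t 1 : Fin p → ℕ) k = ∑ k, μ k + 1 := by
  simp [Finset.sum_add_distrib]

theorem ne_add_single_of_le (h : μ ≤ ν) (t : Fin p) : μ ≠ ν + Pi.single t 1 := by
  rintro rfl
  simpa using h t

theorem multiIndex_induction {P : (Fin p → ℕ) → Prop} (zero : P 0)
    (add_single : ∀ μ t, (∀ k < t, μ k = 0) → P μ → P (μ + Pi.single t 1)) (ν : Fin p → ℕ) :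
    P ν := by
  induction hn : ∑ k, ν k generalizing ν with
  | zero =>
    obtain rfl : ν = 0 := funext fun k => Finset.sum_eq_zero_iff.1 hn k (Finset.mem_univ k)
    exact zero
  | succ n ih =>
    have hne : {k | ν k ≠ 0}.Nonempty := by
      by_contra! h
      simp [Set.eq_empty_iff_forall_notMem] at h
      simp [h] at hn
    set t := wellFounded_lt.min _ hne
    have ht : ν t ≠ 0 := wellFounded_lt.min_mem _ hne
    have hlow : ∀ k < t, ν k = 0 := fun k hk => by
      by_contra h
      exact wellFounded_lt.not_lt_min _ h hk
    have hsplit : ν - Pi.single t 1 + Pi.single t 1 = ν := funext fun k => by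
      rcases eq_or_ne k t with rfl | hk
      · simp only [Pi.add_apply, Pi.sub_apply, Pi.single_eq_same]
        omega
      · simp [hk]
    rw [← hsplit]
    refine add_single _ t (fun k hk => by simp [hlow k hk]) (ih _ ?_)
    have := sum_add_single_one (ν - Pi.single t 1) t
    rw [hsplit] at this
    omega

noncomputable def mderivAlong (l : List (Fin p)) (ν : Fin p → ℕ) :
    ((Fin p → ℝ) → ℝ) → (Fin p → ℝ) → ℝ :=
  l.foldr (fun k acc => (pderiv p k)^[ν k] ∘ acc) id

theorem mderiv_eq_mderivAlong (ν : Fin p → ℕ) :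
    mderiv p ν = mderivAlong (List.finRange p) ν :=
  rfl

theorem mderivAlong_congr {l : List (Fin p)} (h : ∀ k ∈ l, μ k = ν k) :
    mderivAlong l μ = mderivAlong l ν :=
  List.foldr_ext _ _ _ fun k hk _ => by rw [h k hk]

theorem mderivAlong_zero (l : List (Fin p)) : mderivAlong l 0 = id := by
  induction l with
  | nil => rfl
  | cons k l ih => simp [mderivAlong] at ih ⊢

theorem mderivAlong_add_single {l : List (Fin p)} (hl : l.Pairwise (· < ·)) (ht : t ∈ l)
    (hlow : ∀ k ∈ l, k < t → μ k = 0) :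
    mderivAlong l (μ + Pi.single t 1) = pderiv p t ∘ mderivAlong l μ := by
  induction l with
  | nil => cases ht
  | cons a l ih =>
    obtain ⟨ha, hl⟩ := List.pairwise_cons.1 hl
    rcases List.mem_cons.1 ht with rfl | htl
    · have hrest : mderivAlong l (μ + Pi.single t 1) = mderivAlong l μ :=
        mderivAlong_congr fun k hk => by simp [Pi.single_eq_of_ne (ha k hk).ne']
      simp only [mderivAlong, List.foldr_cons] at hrest ⊢
      rw [hrest, Pi.add_apply, Pi.single_eq_same, Function.iterate_succ']
      rfl
    · have hat : a < t := ha t htl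
      have hμa : μ a = 0 := hlow a List.mem_cons_self hat
      simp only [mderivAlong, List.foldr_cons] at ih ⊢
      rw [ih hl htl fun k hk => hlow k (List.mem_cons_of_mem a hk)]
      simp [hμa, hat.ne]

theorem mderiv_add_single (hlow : ∀ k < t, μ k = 0) (f : (Fin p → ℝ) → ℝ) :
    mderiv p (μ + Pi.single t 1) f = pderiv p t (mderiv p μ f) := by
  rw [mderiv_eq_mderivAlong, mderiv_eq_mderivAlong, mderivAlong_add_single
    (List.pairwise_lt_finRange p) (List.mem_finRange t) fun k _ hk => hlow k hk]
  rfl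

theorem mderiv_zero (f : (Fin p → ℝ) → ℝ) : mderiv p 0 f = f := by
  rw [mderiv_eq_mderivAlong, mderivAlong_zero]
  rfl

theorem mderiv_single (t : Fin p) (f : (Fin p → ℝ) → ℝ) :
    mderiv p (Pi.single t 1) f = pderiv p t f := by
  simpa [mderiv_zero] using mderiv_add_single (μ := 0) (fun _ _ => rfl) f

theorem contDiff_pderiv {f : (Fin p → ℝ) → ℝ} {n : ℕ} (hf : ContDiff ℝ (n + 1) f) (t : Fin p) :
    ContDiff ℝ n (pderiv p t f) :=
  (hf.fderiv_right le_rfl).clm_apply contDiff_const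

theorem contDiff_mderiv {f : (Fin p → ℝ) → ℝ} {n : ℕ} (hf : ContDiff ℝ (n + ∑ k, ν k : ℕ) f) :
    ContDiff ℝ n (mderiv p ν f) := by
  induction ν using multiIndex_induction generalizing n with
  | zero => simpa [mderiv_zero] using hf
  | add_single μ t hlow ih =>
    rw [mderiv_add_single hlow]
    have hn : n + 1 + ∑ k, μ k = n + ∑ k, (μ + Pi.single t 1 : Fin p → ℕ) k := by
      rw [sum_add_single_one]; ring
    exact contDiff_pderiv (ih (hn ▸ hf)) t

theorem differentiable_mderiv {f : (Fin p → ℝ) → ℝ} {q : ℕ} (hf : ContDiff ℝ q f)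
    (hν : ∑ k, ν k + 1 ≤ q) : Differentiable ℝ (mderiv p ν f) :=
  have hf' : ContDiff ℝ (1 + ∑ k, ν k : ℕ) f := hf.of_le (by exact_mod_cast (by omega))
  (contDiff_mderiv hf').differentiable one_ne_zero

theorem pderiv_prod_mderiv {ι : Type*} [Fintype ι] [DecidableEq ι] {x : Fin p → ℝ}
    (i : ι → Fin p → ℕ) (F : ι → (Fin p → ℝ) → ℝ) (hlow : ∀ s, ∀ k < t, i s k = 0)
    (hF : ∀ s, DifferentiableAt ℝ (mderiv p (i s) (F s)) x) :
    pderiv p t (fun y => ∏ s, mderiv p (i s) (F s) y) x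
      = ∑ s, ∏ r, mderiv p (Function.update i s (i s + Pi.single t 1) r) (F r) x := by
  rw [pderiv_prod _ fun s _ => hF s]
  refine Finset.sum_congr rfl fun s _ => ?_
  simp only [Function.apply_update (fun r μ => mderiv p μ (F r) x),
    Finset.prod_update_of_mem (Finset.mem_univ s), Finset.sdiff_singleton_eq_erase,
    mderiv_add_single (hlow s)]
  ring

end MultiIndex

theorem Finset.sum_sum_eq_sum_diag_add_sum_lt {H M : Type*} [Fintype H] [LinearOrder H]
    [AddCommMonoid M] (f : H → H → M) :
    ∑ a, ∑ b, f a b = ∑ a, f a a + ∑ a, ∑ b with a < b, (f a b + f b a) := by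
  have hpair : ∀ a b, f a b = (if a < b then f a b else 0) + (if a = b then f a b else 0)
      + (if b < a then f a b else 0) := by
    intro a b
    rcases lt_trichotomy a b with h | rfl | h
    · simp [h, h.ne, h.not_gt]
    · simp
    · simp [h, h.ne', h.not_gt]
  have hswap : ∑ a, ∑ b, (if b < a then f a b else 0) = ∑ a, ∑ b, (if a < b then f b a else 0) :=
    Finset.sum_comm
  simp only [Finset.sum_filter, Finset.sum_add_distrib, ← hswap]
  conv_lhs => enter [2, a, 2, b]; rw [hpair a b]
  simp only [Finset.sum_add_distrib, Finset.sum_ite_eq, Finset.mem_univ, if_true]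
  abel

section WeightedMean

variable {p : ℕ} {H : Type*} [Fintype H] {t : Fin p} {W h : H → (Fin p → ℝ) → ℝ}
  {x : Fin p → ℝ}

noncomputable def weightedMean (W h : H → (Fin p → ℝ) → ℝ) (y : Fin p → ℝ) : ℝ :=
  (∑ a, W a y)⁻¹ * ∑ a, W a y * h a y

theorem DifferentiableAt.weightedMean (hW : ∀ a, DifferentiableAt ℝ (W a) x)
    (hh : ∀ a, DifferentiableAt ℝ (h a) x) (hx : ∑ a, W a x ≠ 0) :
    DifferentiableAt ℝ (weightedMean W h) x :=
  ((DifferentiableAt.fun_sum fun a _ => hW a).inv hx).mul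
    (.fun_sum fun a _ => (hW a).fun_mul (hh a))

theorem pderiv_weightedMean (hW : ∀ a, DifferentiableAt ℝ (W a) x)
    (hh : ∀ a, DifferentiableAt ℝ (h a) x) (hx : ∑ a, W a x ≠ 0) :
    pderiv p t (weightedMean W h) x
      = weightedMean W (fun a => pderiv p t (h a)) x
        + ((∑ a, W a x) ^ 2)⁻¹ * ∑ a, ∑ b, W b x * pderiv p t (W a) x * (h a x - h b x) := by
  have hS : DifferentiableAt ℝ (fun y => ∑ a, W a y) x := .fun_sum fun a _ => hW a
  have hSinv : DifferentiableAt ℝ (fun y => (∑ a, W a y)⁻¹) x := hS.inv hx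
  have hWh : ∀ a ∈ Finset.univ, DifferentiableAt ℝ (fun y => W a y * h a y) x :=
    fun a _ => (hW a).mul (hh a)
  have hdouble : ∑ a, ∑ b, W b x * pderiv p t (W a) x * (h a x - h b x)
      = (∑ b, W b x) * ∑ a, pderiv p t (W a) x * h a x
        - (∑ a, pderiv p t (W a) x) * ∑ b, W b x * h b x := by
    have hexpand : ∀ a b, W b x * pderiv p t (W a) x * (h a x - h b x)
        = W b x * (pderiv p t (W a) x * h a x) - pderiv p t (W a) x * (W b x * h b x) :=
      fun a b => by ring
    simp only [hexpand, Finset.sum_sub_distrib, Finset.sum_mul_sum]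
    rw [Finset.sum_comm]
  unfold weightedMean
  rw [pderiv_mul hSinv (.fun_sum hWh), pderiv_inv hS hx, pderiv_sum _ fun a _ => hW a,
    pderiv_sum _ hWh, hdouble]
  simp only [fun a => pderiv_mul (t := t) (hW a) (hh a), Finset.sum_add_distrib]
  field_simp
  ring

end WeightedMean

structure WeightedFamily (H : Type*) [Fintype H] (p q : ℕ) where
  W : H → (Fin p → ℝ) → ℝ
  g : H → (Fin p → ℝ) → ℝ
  contDiff_W : ∀ a, ContDiff ℝ q (W a)
  contDiff_g : ∀ a, ContDiff ℝ q (g a)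
  sum_W_pos : ∀ x, 0 < ∑ a, W a x

namespace WeightedFamily

variable {H : Type*} [Fintype H] {p q : ℕ} (F : WeightedFamily H p q)

theorem differentiable_W (hq : 1 ≤ q) (a : H) : Differentiable ℝ (F.W a) :=
  (F.contDiff_W a).differentiable (by norm_cast; omega)

theorem differentiableAt_inv_pow_sum (hq : 1 ≤ q) (n : ℕ) (x : Fin p → ℝ) :
    DifferentiableAt ℝ (fun y => ((∑ b, F.W b y) ^ n)⁻¹) x :=
  ((DifferentiableAt.fun_sum fun a _ => F.differentiable_W hq a x).pow n).inv
    (pow_ne_zero n (F.sum_W_pos x).ne')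

theorem pderiv_inv_pow_sum (hq : 1 ≤ q) (n : ℕ) (t : Fin p) (x : Fin p → ℝ) :
    pderiv p t (fun y => ((∑ b, F.W b y) ^ n)⁻¹) x
      = -n * ((∑ b, F.W b x) ^ (n + 1))⁻¹ * ∑ b, pderiv p t (F.W b) x := by
  have hWd : ∀ a, DifferentiableAt ℝ (F.W a) x := fun a => F.differentiable_W hq a x
  rw [pderiv_inv_pow _ (.fun_sum fun a _ => hWd a) (F.sum_W_pos x).ne',
    pderiv_sum _ fun a _ => hWd a]

noncomputable def remainder (ν : Fin p → ℕ) (x : Fin p → ℝ) : ℝ :=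
  mderiv p ν (weightedMean F.W F.g) x - weightedMean F.W (fun a => mderiv p ν (F.g a)) x

theorem remainder_add_single {ν : Fin p → ℕ} {t : Fin p} (hlow : ∀ k < t, ν k = 0)
    (hq : ∑ k, ν k + 1 ≤ q) (hF : Differentiable ℝ (F.remainder ν)) (x : Fin p → ℝ) :
    F.remainder (ν + Pi.single t 1) x
      = pderiv p t (F.remainder ν) x
        + ((∑ a, F.W a x) ^ 2)⁻¹ * ∑ a, ∑ b, F.W b x * pderiv p t (F.W a) x
            * (mderiv p ν (F.g a) x - mderiv p ν (F.g b) x) := by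
  have hWd : ∀ a, DifferentiableAt ℝ (F.W a) x := fun a => F.differentiable_W (by omega) a x
  have hgd : ∀ a, DifferentiableAt ℝ (mderiv p ν (F.g a)) x :=
    fun a => differentiable_mderiv (F.contDiff_g a) hq x
  have hSx : ∑ a, F.W a x ≠ 0 := (F.sum_W_pos x).ne'
  have hsplit : mderiv p ν (weightedMean F.W F.g)
      = fun y => F.remainder ν y + weightedMean F.W (fun a => mderiv p ν (F.g a)) y :=
    funext fun y => (sub_add_cancel _ _).symm
  rw [remainder, mderiv_add_single hlow, hsplit, pderiv_add (hF x) (.weightedMean hWd hgd hSx),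
    pderiv_weightedMean hWd hgd hSx]
  simp only [← mderiv_add_single hlow]
  ring

end WeightedFamily

structure TermIndex (H : Type*) (p : ℕ) where
  k : ℕ
  a : Fin (k + 2) → H
  i : Fin (k + 2) → Fin p → ℕ
  j : Fin p → ℕ

namespace TermIndex

variable {H : Type*} {p q : ℕ}

noncomputable def term [Fintype H] (d : TermIndex H p) (F : WeightedFamily H p q)
    (x : Fin p → ℝ) : ℝ :=
  ((∑ b, F.W b x) ^ (d.k + 2))⁻¹ * (∏ s, mderiv p (d.i s) (F.W (d.a s)) x) *
    (mderiv p d.j (F.g (d.a 0)) x - mderiv p d.j (F.g (d.a 1)) x)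

def appendFactor (d : TermIndex H p) (t : Fin p) (b : H) : TermIndex H p :=
  ⟨d.k + 1, Fin.snoc d.a b, Fin.snoc d.i (Pi.single t 1), d.j⟩

def raiseFactor (d : TermIndex H p) (t : Fin p) (s : Fin (d.k + 2)) : TermIndex H p :=
  ⟨d.k, d.a, Function.update d.i s (d.i s + Pi.single t 1), d.j⟩

def raiseDifference (d : TermIndex H p) (t : Fin p) : TermIndex H p :=
  ⟨d.k, d.a, d.i, d.j + Pi.single t 1⟩

def pair (a b : H) (i₀ i₁ j : Fin p → ℕ) : TermIndex H p :=
  ⟨0, ![a, b], ![i₀, i₁], j⟩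

theorem term_appendFactor [Fintype H] (d : TermIndex H p) (t : Fin p) (b : H)
    (F : WeightedFamily H p q) (x : Fin p → ℝ) :
    (d.appendFactor t b).term F x
      = ((∑ c, F.W c x) ^ (d.k + 3))⁻¹
        * ((∏ s, mderiv p (d.i s) (F.W (d.a s)) x) * pderiv p t (F.W b) x)
        * (mderiv p d.j (F.g (d.a 0)) x - mderiv p d.j (F.g (d.a 1)) x) := by
  show ((∑ c, F.W c x) ^ (d.k + 1 + 2))⁻¹
      * (∏ s : Fin (d.k + 1 + 2),
          mderiv p ((Fin.snoc d.i (Pi.single t 1) : Fin (d.k + 1 + 2) → Fin p → ℕ) s)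
            (F.W ((Fin.snoc d.a b : Fin (d.k + 1 + 2) → H) s)) x)
      * (mderiv p d.j (F.g ((Fin.snoc d.a b : Fin (d.k + 1 + 2) → H) (Fin.castSucc 0))) x
        - mderiv p d.j (F.g ((Fin.snoc d.a b : Fin (d.k + 1 + 2) → H) (Fin.castSucc 1))) x) = _
  rw [Fin.prod_univ_castSucc]
  simp only [Fin.snoc_castSucc, Fin.snoc_last, mderiv_single]

theorem term_pair [Fintype H] (a b : H) (i₀ i₁ j : Fin p → ℕ) (F : WeightedFamily H p q)
    (x : Fin p → ℝ) :
    (pair a b i₀ i₁ j).term F x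
      = ((∑ c, F.W c x) ^ 2)⁻¹ * (mderiv p i₀ (F.W a) x * mderiv p i₁ (F.W b) x)
        * (mderiv p j (F.g a) x - mderiv p j (F.g b) x) := by
  show ((∑ c, F.W c x) ^ (0 + 2))⁻¹ * (∏ s : Fin 2, mderiv p (![i₀, i₁] s) (F.W (![a, b] s)) x)
      * (mderiv p j (F.g a) x - mderiv p j (F.g b) x) = _
  rw [Fin.prod_univ_two]
  rfl

variable [LinearOrder H]

structure Admissible (ν : Fin p → ℕ) (d : TermIndex H p) : Prop where
  k_lt : d.k < ∑ k, ν k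
  a_lt : d.a 0 < d.a 1
  j_ne : d.j ≠ ν
  sum_i_add_j : ∑ s, d.i s + d.j = ν

variable {ν : Fin p → ℕ} {d : TermIndex H p} {t : Fin p}

theorem Admissible.j_le (hd : d.Admissible ν) : d.j ≤ ν :=
  hd.sum_i_add_j ▸ le_add_self

theorem Admissible.i_le (hd : d.Admissible ν) (s : Fin (d.k + 2)) : d.i s ≤ ν :=
  hd.sum_i_add_j ▸ (Finset.single_le_sum (fun _ _ => zero_le) (Finset.mem_univ s)).trans
    le_self_add

theorem Admissible.appendFactor (hd : d.Admissible ν) (b : H) :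
    (d.appendFactor t b).Admissible (ν + Pi.single t 1) where
  k_lt := by
    show d.k + 1 < _
    simpa only [sum_add_single_one, add_lt_add_iff_right] using hd.k_lt
  a_lt := by
    show (Fin.snoc d.a b : Fin (d.k + 1 + 2) → H) (Fin.castSucc 0)
      < (Fin.snoc d.a b : Fin (d.k + 1 + 2) → H) (Fin.castSucc 1)
    simpa only [Fin.snoc_castSucc] using hd.a_lt
  j_ne := ne_add_single_of_le hd.j_le t
  sum_i_add_j := by
    show ∑ s : Fin (d.k + 1 + 2), Fin.snoc d.i (Pi.single t 1) s + d.j = _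
    rw [Fin.sum_univ_castSucc]
    simp only [Fin.snoc_castSucc, Fin.snoc_last]
    rw [add_right_comm, hd.sum_i_add_j]

theorem Admissible.raiseFactor (hd : d.Admissible ν) (s : Fin (d.k + 2)) :
    (d.raiseFactor t s).Admissible (ν + Pi.single t 1) where
  k_lt := by
    show d.k < _
    simpa only [sum_add_single_one] using hd.k_lt.trans (Nat.lt_succ_self _)
  a_lt := hd.a_lt
  j_ne := ne_add_single_of_le hd.j_le t
  sum_i_add_j := by
    show ∑ r : Fin (d.k + 2), Function.update d.i s (d.i s + Pi.single t 1) r + d.j = _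
    rw [Finset.sum_update_of_mem (Finset.mem_univ s), Finset.sdiff_singleton_eq_erase,
      ← hd.sum_i_add_j, ← Finset.add_sum_erase _ _ (Finset.mem_univ s)]
    abel

theorem Admissible.raiseDifference (hd : d.Admissible ν) :
    (d.raiseDifference t).Admissible (ν + Pi.single t 1) where
  k_lt := by
    show d.k < _
    simpa only [sum_add_single_one] using hd.k_lt.trans (Nat.lt_succ_self _)
  a_lt := hd.a_lt
  j_ne := by simpa [TermIndex.raiseDifference] using hd.j_ne
  sum_i_add_j := by
    show ∑ s : Fin (d.k + 2), d.i s + (d.j + Pi.single t 1) = _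
    rw [← add_assoc, hd.sum_i_add_j]

theorem admissible_pair {a b : H} (hab : a < b) {i₀ i₁ : Fin p → ℕ}
    (hi : i₀ + i₁ = Pi.single t 1) : (pair a b i₀ i₁ ν).Admissible (ν + Pi.single t 1) where
  k_lt := by
    show 0 < _
    rw [sum_add_single_one]
    exact Nat.succ_pos _
  a_lt := hab
  j_ne := ne_add_single_of_le le_rfl t
  sum_i_add_j := by
    show ∑ s : Fin 2, ![i₀, i₁] s + ν = _
    rw [Fin.sum_univ_two, Matrix.cons_val_zero, Matrix.cons_val_one, Matrix.cons_val_zero, hi,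
      add_comm]

variable [Fintype H]

theorem Admissible.differentiable_mderiv_W (hd : d.Admissible ν) (hq : ∑ k, ν k + 1 ≤ q)
    (F : WeightedFamily H p q) (s : Fin (d.k + 2)) :
    Differentiable ℝ (mderiv p (d.i s) (F.W (d.a s))) :=
  differentiable_mderiv (F.contDiff_W _) (le_trans (by gcongr with k; exact hd.i_le s k) hq)

theorem Admissible.differentiable_mderiv_g (hd : d.Admissible ν) (hq : ∑ k, ν k + 1 ≤ q)
    (F : WeightedFamily H p q) (a : H) : Differentiable ℝ (mderiv p d.j (F.g a)) :=
  differentiable_mderiv (F.contDiff_g a) (le_trans (by gcongr with k; exact hd.j_le k) hq)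

theorem Admissible.differentiableAt_prod (hd : d.Admissible ν) (hq : ∑ k, ν k + 1 ≤ q)
    (F : WeightedFamily H p q) (x : Fin p → ℝ) :
    DifferentiableAt ℝ (fun y => ∏ s, mderiv p (d.i s) (F.W (d.a s)) y) x :=
  (HasFDerivAt.finsetProd fun s _ =>
    (hd.differentiable_mderiv_W hq F s x).hasFDerivAt).differentiableAt

theorem Admissible.differentiable_term (hd : d.Admissible ν) (hq : ∑ k, ν k + 1 ≤ q)
    (F : WeightedFamily H p q) : Differentiable ℝ (d.term F) := fun x =>
  ((F.differentiableAt_inv_pow_sum (by omega) _ x).mul (hd.differentiableAt_prod hq F x)).mul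
    ((hd.differentiable_mderiv_g hq F _ x).sub (hd.differentiable_mderiv_g hq F _ x))

theorem Admissible.pderiv_term (hd : d.Admissible ν) (hlow : ∀ k < t, ν k = 0)
    (hq : ∑ k, ν k + 1 ≤ q) (F : WeightedFamily H p q) (x : Fin p → ℝ) :
    pderiv p t (d.term F) x
      = ∑ b, -(d.k + 2 : ℝ) * (d.appendFactor t b).term F x
        + ∑ s, (d.raiseFactor t s).term F x + (d.raiseDifference t).term F x := by
  have hA := F.differentiableAt_inv_pow_sum (by omega) (d.k + 2) x
  have hP := hd.differentiableAt_prod hq F x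
  have hG : ∀ a, DifferentiableAt ℝ (mderiv p d.j (F.g a)) x :=
    fun a => hd.differentiable_mderiv_g hq F a x
  have hilow : ∀ s, ∀ k < t, d.i s k = 0 :=
    fun s k hk => Nat.eq_zero_of_le_zero (hlow k hk ▸ hd.i_le s k)
  have hjlow : ∀ k < t, d.j k = 0 :=
    fun k hk => Nat.eq_zero_of_le_zero (hlow k hk ▸ hd.j_le k)
  have hderivA : pderiv p t (fun y => ((∑ b, F.W b y) ^ (d.k + 2))⁻¹) x
      * (∏ s, mderiv p (d.i s) (F.W (d.a s)) x)
      * (mderiv p d.j (F.g (d.a 0)) x - mderiv p d.j (F.g (d.a 1)) x)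
      = ∑ b, -(d.k + 2 : ℝ) * (d.appendFactor t b).term F x := by
    rw [F.pderiv_inv_pow_sum (by omega), Finset.mul_sum, Finset.sum_mul, Finset.sum_mul]
    refine Finset.sum_congr rfl fun b _ => ?_
    rw [term_appendFactor]
    push_cast
    ring
  have hderivP : ((∑ b, F.W b x) ^ (d.k + 2))⁻¹
      * pderiv p t (fun y => ∏ s, mderiv p (d.i s) (F.W (d.a s)) y) x
      * (mderiv p d.j (F.g (d.a 0)) x - mderiv p d.j (F.g (d.a 1)) x)
      = ∑ s, (d.raiseFactor t s).term F x := by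
    rw [pderiv_prod_mderiv _ _ hilow (hd.differentiable_mderiv_W hq F · x), Finset.mul_sum,
      Finset.sum_mul]
    rfl
  have hderivG : ((∑ b, F.W b x) ^ (d.k + 2))⁻¹ * (∏ s, mderiv p (d.i s) (F.W (d.a s)) x)
      * pderiv p t (fun y => mderiv p d.j (F.g (d.a 0)) y - mderiv p d.j (F.g (d.a 1)) y) x
      = (d.raiseDifference t).term F x := by
    rw [pderiv_sub (hG _) (hG _), ← mderiv_add_single hjlow, ← mderiv_add_single hjlow]
    rfl
  have hterm : d.term F = fun y => ((∑ b, F.W b y) ^ (d.k + 2))⁻¹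
      * (∏ s, mderiv p (d.i s) (F.W (d.a s)) y)
      * (mderiv p d.j (F.g (d.a 0)) y - mderiv p d.j (F.g (d.a 1)) y) := rfl
  rw [hterm, pderiv_mul (hA.fun_mul hP) ((hG _).fun_sub (hG _)), pderiv_mul hA hP, ← hderivA,
    ← hderivP, ← hderivG]
  ring

end TermIndex

section TermSpan

variable {H : Type*} [Fintype H] [LinearOrder H] {p q : ℕ} {ν : Fin p → ℕ} {t : Fin p}

def termSpan (ν : Fin p → ℕ) : Submodule ℝ (WeightedFamily H p q → (Fin p → ℝ) → ℝ) :=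
  Submodule.span ℝ ((fun d : TermIndex H p => d.term) '' {d | d.Admissible ν})

theorem TermIndex.Admissible.pderiv_term_mem {d : TermIndex H p} (hd : d.Admissible ν)
    (hlow : ∀ k < t, ν k = 0) (hq : ∑ k, ν k + 1 ≤ q) :
    (fun F : WeightedFamily H p q => pderiv p t (d.term F)) ∈ termSpan (ν + Pi.single t 1) := by
  have hsum : (fun F : WeightedFamily H p q => pderiv p t (d.term F))
      = ∑ b, (-(d.k + 2 : ℝ)) • (d.appendFactor t b).term + ∑ s, (d.raiseFactor t s).term
        + (d.raiseDifference t).term := by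
    funext F x
    simp [hd.pderiv_term hlow hq F x]
  rw [hsum]
  refine add_mem (add_mem (sum_mem fun b _ => Submodule.smul_mem _ _ ?_)
    (sum_mem fun s _ => ?_)) ?_ <;> refine Submodule.subset_span ⟨_, ?_, rfl⟩
  exacts [hd.appendFactor b, hd.raiseFactor s, hd.raiseDifference]

-- Differentiability is carried along because `pderiv` is additive only on differentiable functions.
theorem pderiv_mem_termSpan {u : WeightedFamily H p q → (Fin p → ℝ) → ℝ}
    (hu : u ∈ termSpan ν) (hlow : ∀ k < t, ν k = 0) (hq : ∑ k, ν k + 1 ≤ q) :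
    (∀ F, Differentiable ℝ (u F)) ∧ (fun F => pderiv p t (u F)) ∈ termSpan (ν + Pi.single t 1) := by
  induction hu using Submodule.span_induction with
  | mem _ hd =>
    obtain ⟨d, hd, rfl⟩ := hd
    exact ⟨hd.differentiable_term hq, hd.pderiv_term_mem hlow hq⟩
  | zero =>
    refine ⟨fun _ => differentiable_const 0, ?_⟩
    convert (termSpan (ν + Pi.single t 1)).zero_mem using 1
    funext F x
    simp [pderiv]
  | add u v _ _ hu hv =>
    refine ⟨fun F => (hu.1 F).add (hv.1 F), ?_⟩
    convert add_mem hu.2 hv.2 using 1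
    funext F x
    exact pderiv_add (hu.1 F x) (hv.1 F x)
  | smul c u _ hu =>
    refine ⟨fun F => (hu.1 F).const_mul c, ?_⟩
    convert Submodule.smul_mem _ c hu.2 using 1
    funext F x
    exact pderiv_const_mul c (hu.1 F x)

theorem quotientCorrection_mem_termSpan :
    (fun (F : WeightedFamily H p q) x => ((∑ a, F.W a x) ^ 2)⁻¹ * ∑ a, ∑ b,
        F.W b x * pderiv p t (F.W a) x * (mderiv p ν (F.g a) x - mderiv p ν (F.g b) x))
      ∈ termSpan (ν + Pi.single t 1) := by
  have hpairs : (fun (F : WeightedFamily H p q) x => ((∑ a, F.W a x) ^ 2)⁻¹ * ∑ a, ∑ b,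
        F.W b x * pderiv p t (F.W a) x * (mderiv p ν (F.g a) x - mderiv p ν (F.g b) x))
      = ∑ a, ∑ b with a < b, ((TermIndex.pair a b (Pi.single t 1) 0 ν).term
          - (TermIndex.pair a b 0 (Pi.single t 1) ν).term) := by
    funext F x
    simp only [Finset.sum_sum_eq_sum_diag_add_sum_lt, sub_self, mul_zero, Finset.sum_const_zero,
      zero_add, Finset.mul_sum, Finset.sum_apply, Pi.sub_apply, TermIndex.term_pair,
      mderiv_single, mderiv_zero]
    refine Finset.sum_congr rfl fun a _ => Finset.sum_congr rfl fun b _ => ?_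
    ring
  rw [hpairs]
  refine sum_mem fun a _ => sum_mem fun b hab => sub_mem ?_ ?_ <;>
    refine Submodule.subset_span ⟨_, TermIndex.admissible_pair (Finset.mem_filter.1 hab).2 ?_, rfl⟩
  exacts [add_zero _, zero_add _]

theorem remainder_mem_termSpan (hν : ∑ k, ν k ≤ q) :
    (WeightedFamily.remainder · ν : WeightedFamily H p q → (Fin p → ℝ) → ℝ) ∈ termSpan ν := by
  induction ν using multiIndex_induction with
  | zero =>
    convert (termSpan 0).zero_mem using 1
    funext F x
    simp [WeightedFamily.remainder, mderiv_zero]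
  | add_single μ t hlow ih =>
    rw [sum_add_single_one] at hν
    obtain ⟨hdiff, hmem⟩ := pderiv_mem_termSpan (ih (by omega)) hlow hν
    have hstep : (WeightedFamily.remainder · (μ + Pi.single t 1)
          : WeightedFamily H p q → (Fin p → ℝ) → ℝ)
        = (fun F => pderiv p t (F.remainder μ)) + fun F x => ((∑ a, F.W a x) ^ 2)⁻¹ * ∑ a, ∑ b,
            F.W b x * pderiv p t (F.W a) x * (mderiv p μ (F.g a) x - mderiv p μ (F.g b) x) :=
      funext fun F => funext (F.remainder_add_single hlow hν (hdiff F))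
    rw [hstep]
    exact add_mem hmem quotientCorrection_mem_termSpan

end TermSpan

section Coefficients

variable {H : Type*} [Fintype H] [LinearOrder H] {p q : ℕ} {ν : Fin p → ℕ}

noncomputable def correctionSum (ν : Fin p → ℕ) :
    ((k : ℕ) → (Fin (k + 2) → H) → (Fin (k + 2) → Fin p → ℕ) → (Fin p → ℕ) → ℝ) →ₗ[ℝ]
      (WeightedFamily H p q → (Fin p → ℝ) → ℝ) where
  toFun c F x := ∑ k ∈ Finset.range (∑ t, ν t), ∑ j ∈ (Finset.Iic ν).erase ν,
    ∑ a ∈ Finset.univ.filter (fun a : Fin (k + 2) → H => a 0 < a 1),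
      ∑ i ∈ (Fintype.piFinset fun _ : Fin (k + 2) => Finset.Iic ν).filter
          (fun i => (∑ s, i s) = ν - j),
        c k a i j * (TermIndex.mk k a i j).term F x
  map_add' c c' := by
    funext F x
    simp only [Pi.add_apply, add_mul, Finset.sum_add_distrib]
  map_smul' r c := by
    funext F x
    simp only [Pi.smul_apply, smul_eq_mul, mul_assoc, Finset.mul_sum, RingHom.id_apply]

theorem correctionSum_apply
    (c : (k : ℕ) → (Fin (k + 2) → H) → (Fin (k + 2) → Fin p → ℕ) → (Fin p → ℕ) → ℝ)
    (F : WeightedFamily H p q) (x : Fin p → ℝ) :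
    correctionSum ν c F x
      = ∑ k ∈ Finset.range (∑ t, ν t), ∑ j ∈ (Finset.Iic ν).erase ν,
          ((∑ a, F.W a x) ^ (k + 2))⁻¹ *
            ∑ a ∈ Finset.univ.filter (fun a : Fin (k + 2) → H => a 0 < a 1),
              ∑ i ∈ (Fintype.piFinset fun _ : Fin (k + 2) => Finset.Iic ν).filter
                  (fun i => (∑ s, i s) = ν - j),
                c k a i j * (∏ s, mderiv p (i s) (F.W (a s)) x) *
                  (mderiv p j (F.g (a 0)) x - mderiv p j (F.g (a 1)) x) := by
  simp only [correctionSum, LinearMap.coe_mk, AddHom.coe_mk, TermIndex.term, Finset.mul_sum]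
  refine Finset.sum_congr rfl fun k _ => Finset.sum_congr rfl fun j _ =>
    Finset.sum_congr rfl fun a _ => Finset.sum_congr rfl fun i _ => ?_
  ring

theorem TermIndex.Admissible.term_mem_range {d : TermIndex H p} (hd : d.Admissible ν) :
    d.term ∈ LinearMap.range (correctionSum (q := q) ν) := by
  classical
  refine ⟨fun k a i j => if TermIndex.mk k a i j = d then 1 else 0, ?_⟩
  funext F x
  obtain ⟨k₀, a₀, i₀, j₀⟩ := d
  have hk : k₀ ∈ Finset.range (∑ t, ν t) := Finset.mem_range.2 hd.k_lt
  have hj : j₀ ∈ (Finset.Iic ν).erase ν := Finset.mem_erase.2 ⟨hd.j_ne, Finset.mem_Iic.2 hd.j_le⟩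
  have ha : a₀ ∈ Finset.univ.filter (fun a : Fin (k₀ + 2) → H => a 0 < a 1) := by
    simpa using hd.a_lt
  have hi : i₀ ∈ (Fintype.piFinset fun _ : Fin (k₀ + 2) => Finset.Iic ν).filter
      (fun i => (∑ s, i s) = ν - j₀) := by
    simpa [Finset.mem_Iic] using ⟨hd.i_le, eq_tsub_of_add_eq hd.sum_i_add_j⟩
  simp only [correctionSum, LinearMap.coe_mk, AddHom.coe_mk]
  rw [Finset.sum_eq_single_of_mem k₀ hk fun k _ hk => by simp [hk],
    Finset.sum_eq_single_of_mem j₀ hj fun j _ hj => by simp [hj]]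
  simp [ite_and, Finset.sum_ite_eq', ha, hi]

end Coefficients

theorem stmt3_general {H : Type*} [Fintype H] [LinearOrder H]
    (p q : ℕ)
    (ν : Fin p → ℕ) (hνq : ∑ k, ν k ≤ q) :
    ∃ c : (k : ℕ) → (Fin (k + 2) → H) → (Fin (k + 2) → (Fin p → ℕ)) → (Fin p → ℕ) → ℝ,
      ∀ W g : H → (Fin p → ℝ) → ℝ,
        (∀ a x, 0 ≤ W a x) → (∀ a, ContDiff ℝ q (W a)) → (∀ a, ContDiff ℝ q (g a)) →
        (∀ x, 0 < ∑ a, W a x) →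
        ∀ x : Fin p → ℝ,
          mderiv p ν (fun y => (∑ a, W a y)⁻¹ * ∑ a, W a y * g a y) x =
            (∑ a, W a x)⁻¹ * (∑ a, W a x * mderiv p ν (g a) x) +
              ∑ k ∈ Finset.range (∑ t, ν t), ∑ j ∈ (Finset.Iic ν).erase ν,
                ((∑ a, W a x) ^ (k + 2))⁻¹ *
                  ∑ a ∈ Finset.univ.filter (fun a : Fin (k + 2) → H => a 0 < a 1),
                    ∑ i ∈ (Fintype.piFinset fun _ : Fin (k + 2) => Finset.Iic ν).filter
                        (fun i => (∑ s, i s) = ν - j),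
                      c k a i j * (∏ s, mderiv p (i s) (W (a s)) x) *
                        (mderiv p j (g (a 0)) x - mderiv p j (g (a 1)) x) := by
  have hspan : termSpan (H := H) (q := q) ν ≤ LinearMap.range (correctionSum ν) :=
    Submodule.span_le.2 fun _ ⟨d, hd, hu⟩ => hu ▸ hd.term_mem_range
  obtain ⟨c, hc⟩ := hspan (remainder_mem_termSpan hνq)
  refine ⟨c, fun W g _ hW hg hpos x => ?_⟩
  have h := congrFun (congrFun hc ⟨W, g, hW, hg, hpos⟩) x
  rw [correctionSum_apply] at h
  rw [h]
  unfold WeightedFamily.remainder weightedMean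
  ring

/-- Let `H` be a finite nonempty linearly ordered set, `p, q ≥ 1`,
and `ν` a `p`-dimensional multi-index with `1 ≤ |ν| ≤ q`.  There exist real constants
`c k a i j` (indexed over `k` with tuples of length `k + 2`, reparametrizing the paper's
`k = 2, …, |ν|+1`), depending only on the indices, such that for all `q`-times
differentiable `W a : ℝ^p → [0,∞)`, `g a : ℝ^p → ℝ` with `W := ∑_a W a > 0` everywhere,
the function `ḡ = W⁻¹ ∑_a W a g a` satisfies
`ḡ^{(ν)} = W⁻¹ ∑_a W a g_a^{(ν)} + ∑_{k=2}^{|ν|+1} ∑_{0 ≤ j < ν} W^{-k} U_{k,ν,j}`,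
where `U_{k,ν,j} = ∑ c_{k,ν}(a₁,…,a_k,i₁,…,i_k) (∏_s W_{a_s}^{(i_s)}) (g_{a₁}^{(j)} − g_{a₂}^{(j)})`,
the inner sum running over `a₁,…,a_k ∈ H` with `a₁ < a₂` and `i₁ + ⋯ + i_k = ν − j`. -/
theorem stmt3 {H : Type*} [Fintype H] [Nonempty H] [LinearOrder H]
    (p q : ℕ) (hp : 1 ≤ p) (hq : 1 ≤ q)
    (ν : Fin p → ℕ) (hν1 : 1 ≤ ∑ k, ν k) (hνq : ∑ k, ν k ≤ q) :
    ∃ c : (k : ℕ) → (Fin (k + 2) → H) → (Fin (k + 2) → (Fin p → ℕ)) → (Fin p → ℕ) → ℝ,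
      ∀ W g : H → (Fin p → ℝ) → ℝ,
        (∀ a x, 0 ≤ W a x) → (∀ a, ContDiff ℝ q (W a)) → (∀ a, ContDiff ℝ q (g a)) →
        (∀ x, 0 < ∑ a, W a x) →
        ∀ x : Fin p → ℝ,
          mderiv p ν (fun y => (∑ a, W a y)⁻¹ * ∑ a, W a y * g a y) x =
            (∑ a, W a x)⁻¹ * (∑ a, W a x * mderiv p ν (g a) x) +
              ∑ k ∈ Finset.range (∑ t, ν t), ∑ j ∈ (Finset.Iic ν).erase ν,
                ((∑ a, W a x) ^ (k + 2))⁻¹ *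
                  ∑ a ∈ Finset.univ.filter (fun a : Fin (k + 2) → H => a 0 < a 1),
                    ∑ i ∈ (Fintype.piFinset fun _ : Fin (k + 2) => Finset.Iic ν).filter
                        (fun i => (∑ s, i s) = ν - j),
                      c k a i j * (∏ s, mderiv p (i s) (W (a s)) x) *
                        (mderiv p j (g (a 0)) x - mderiv p j (g (a 1)) x) :=
  stmt3_general p q ν hνq
end

section
/- Let p ≥ 1, l ≥ 1, let h : ℝ^p → ℝ be l-times continuously differentiable, and fix ε ∈ ℝ^p. If M ≥ 0 is such that |h^{(μ)}(ε)| ≤ M for every multi-index μ with 1 ≤ |μ| ≤ l, and if moreover this bound holds for all points in a neighborhood of ε (i.e. |h^{(μ)}(ε')| ≤ M for all ε' near ε and all 1 ≤ |μ| ≤ l), then for every multi-index ν with |ν| = l, |(e^h)^{(ν)}(ε)| ≤ (l + M)^l · e^{h(ε)}. -/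
section SetPartitions

variable {α : Type*}

def consIntoBlock (a : α) : List (List α) → List (List (List α))
  | [] => []
  | κ :: T => ((a :: κ) :: T) :: (consIntoBlock a T).map (κ :: ·)

/-- The set partitions of the positions of `as`, each block recorded as the subsequence of `as`
it selects: the head of `as` either forms a block of its own or joins a block of a partition of
the tail. -/
def faaDiBrunoTerms : List α → List (List (List α))
  | [] => [[]]
  | a :: as => (faaDiBrunoTerms as).flatMap fun T => ([a] :: T) :: consIntoBlock a T

theorem exists_eq_append_of_mem_consIntoBlock {a : α} {T T' : List (List α)}
    (h : T' ∈ consIntoBlock a T) :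
    ∃ T₁ κ T₂, T = T₁ ++ κ :: T₂ ∧ T' = T₁ ++ (a :: κ) :: T₂ := by
  induction T generalizing T' with
  | nil => simp [consIntoBlock] at h
  | cons κ T ih =>
    simp only [consIntoBlock, List.mem_cons, List.mem_map] at h
    rcases h with rfl | ⟨T', hT', rfl⟩
    · exact ⟨[], κ, T, rfl, rfl⟩
    · obtain ⟨T₁, κ', T₂, rfl, rfl⟩ := ih hT'
      exact ⟨κ :: T₁, κ', T₂, rfl, rfl⟩

theorem length_of_mem_consIntoBlock {a : α} {T T' : List (List α)}
    (h : T' ∈ consIntoBlock a T) : T'.length = T.length := by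
  obtain ⟨T₁, κ, T₂, rfl, rfl⟩ := exists_eq_append_of_mem_consIntoBlock h
  simp

theorem length_consIntoBlock (a : α) (T : List (List α)) :
    (consIntoBlock a T).length = T.length := by
  induction T with
  | nil => rfl
  | cons κ T ih => simp [consIntoBlock, ih]

theorem length_le_of_mem_faaDiBrunoTerms {as : List α} {T : List (List α)}
    (hT : T ∈ faaDiBrunoTerms as) : T.length ≤ as.length := by
  induction as generalizing T with
  | nil => simp_all [faaDiBrunoTerms]
  | cons a as ih =>
    simp only [faaDiBrunoTerms, List.mem_flatMap, List.mem_cons] at hT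
    obtain ⟨T₀, hT₀, rfl | hT⟩ := hT
    · simpa using ih hT₀
    · rw [length_of_mem_consIntoBlock hT, List.length_cons]
      exact (ih hT₀).trans (Nat.le_succ _)

theorem ne_nil_and_sublist_of_mem_faaDiBrunoTerms {as : List α} {T : List (List α)}
    {κ : List α} (hT : T ∈ faaDiBrunoTerms as) (hκ : κ ∈ T) :
    κ ≠ [] ∧ κ.Sublist as := by
  induction as generalizing T κ with
  | nil => simp_all [faaDiBrunoTerms]
  | cons a as ih =>
    simp only [faaDiBrunoTerms, List.mem_flatMap, List.mem_cons] at hT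
    obtain ⟨T₀, hT₀, rfl | hT⟩ := hT
    · rcases List.mem_cons.1 hκ with rfl | hκ
      · simp
      · exact (ih hT₀ hκ).imp_right (·.cons a)
    · obtain ⟨T₁, κ', T₂, rfl, rfl⟩ := exists_eq_append_of_mem_consIntoBlock hT
      simp only [List.mem_append, List.mem_cons] at hκ
      rcases hκ with hκ | rfl | hκ
      · exact (ih hT₀ (by simp [hκ])).imp_right (·.cons a)
      · exact ⟨List.cons_ne_nil _ _, (ih hT₀ (by simp)).2.cons_cons a⟩
      · exact (ih hT₀ (by simp [hκ])).imp_right (·.cons a)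

theorem sum_map_faaDiBrunoTerms_cons {β : Type*} [AddCommMonoid β] (F : List (List α) → β)
    (a : α) (as : List α) :
    ((faaDiBrunoTerms (a :: as)).map F).sum =
      ((faaDiBrunoTerms as).map fun T => F ([a] :: T) + ((consIntoBlock a T).map F).sum).sum := by
  simp [faaDiBrunoTerms, List.flatMap_def, List.sum_flatten, Function.comp_def]

theorem sum_pow_length_faaDiBrunoTerms_le {M : ℝ} (hM : 0 ≤ M) (as : List α) :
    ((faaDiBrunoTerms as).map fun T => M ^ T.length).sum ≤ (as.length + M) ^ as.length := by
  induction as with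
  | nil => simp [faaDiBrunoTerms]
  | cons a as ih =>
    have hstep : ∀ T ∈ faaDiBrunoTerms as,
        M ^ ([a] :: T).length + ((consIntoBlock a T).map fun T' => M ^ T'.length).sum
          ≤ (as.length + M) * M ^ T.length := by
      intro T hT
      have hT : (T.length : ℝ) ≤ as.length := by
        exact_mod_cast length_le_of_mem_faaDiBrunoTerms hT
      rw [List.map_congr_left fun T' hT' => by rw [length_of_mem_consIntoBlock hT'],
        List.map_const', List.sum_replicate, length_consIntoBlock, List.length_cons,
        nsmul_eq_mul, pow_succ]
      nlinarith [pow_nonneg hM T.length]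
    calc ((faaDiBrunoTerms (a :: as)).map fun T => M ^ T.length).sum
        ≤ ((faaDiBrunoTerms as).map fun T => (as.length + M) * M ^ T.length).sum := by
          rw [sum_map_faaDiBrunoTerms_cons]
          exact List.sum_le_sum hstep
      _ = (as.length + M) * ((faaDiBrunoTerms as).map fun T => M ^ T.length).sum :=
          List.sum_map_mul_left _ _ _
      _ ≤ (as.length + M) * (as.length + M) ^ as.length := by gcongr
      _ ≤ ((a :: as).length + M) ^ (a :: as).length := by
          rw [← pow_succ', List.length_cons, Nat.cast_succ]
          gcongr
          linarith

def faaDiBrunoSum (g : List α → ℝ) (as : List α) : ℝ :=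
  ((faaDiBrunoTerms as).map fun T => (T.map g).prod).sum

theorem faaDiBrunoSum_nil (g : List α → ℝ) : faaDiBrunoSum g [] = 1 := by
  simp [faaDiBrunoSum, faaDiBrunoTerms]

theorem faaDiBrunoSum_cons (g : List α → ℝ) (a : α) (as : List α) :
    faaDiBrunoSum g (a :: as) = g [a] * faaDiBrunoSum g as +
      ((faaDiBrunoTerms as).map fun T =>
        ((consIntoBlock a T).map fun T' => (T'.map g).prod).sum).sum := by
  simp [faaDiBrunoSum, sum_map_faaDiBrunoTerms_cons, List.sum_map_add, List.sum_map_mul_left]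

theorem abs_faaDiBrunoSum_le {g : List α → ℝ} {as : List α} {M : ℝ} (hM : 0 ≤ M)
    (hg : ∀ κ : List α, κ ≠ [] → κ.Sublist as → |g κ| ≤ M) :
    |faaDiBrunoSum g as| ≤ (as.length + M) ^ as.length := by
  refine (List.le_sum_of_subadditive abs abs_zero.le abs_add_le _).trans
    (le_trans ?_ (sum_pow_length_faaDiBrunoTerms_le hM as))
  rw [List.map_map]
  refine List.sum_le_sum fun T hT => ?_
  calc |(T.map g).prod| = (T.map fun κ => |g κ|).prod :=
        (map_list_prod absHom _).trans (by rw [List.map_map]; rfl)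
    _ ≤ (T.map fun _ => M).prod :=
        List.prod_map_le_prod_map₀ _ _ (fun κ _ => abs_nonneg (g κ)) fun κ hκ =>
          let ⟨hne, hsub⟩ := ne_nil_and_sublist_of_mem_faaDiBrunoTerms hT hκ
          hg κ hne hsub
    _ = M ^ T.length := by rw [List.map_const', List.prod_replicate]

end SetPartitions

theorem hasDerivAt_list_sum_map {ι : Type*} (L : List ι) {f : ι → ℝ → ℝ} {f' : ι → ℝ}
    {t : ℝ} (hf : ∀ i ∈ L, HasDerivAt (f i) (f' i) t) :
    HasDerivAt (fun s => (L.map (f · s)).sum) (L.map f').sum t := by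
  induction L with
  | nil => exact hasDerivAt_const t 0
  | cons i L ih =>
    simp only [List.map_cons, List.sum_cons]
    exact (hf i (by simp)).add (ih fun j hj => hf j (by simp [hj]))

theorem hasDerivAt_list_prod_map_of_consIntoBlock {α : Type*} {a : α}
    {g : List α → ℝ → ℝ} {t : ℝ} (T : List (List α))
    (hg : ∀ κ ∈ T, HasDerivAt (g κ) (g (a :: κ) t) t) :
    HasDerivAt (fun s => (T.map (g · s)).prod)
      ((consIntoBlock a T).map fun T' => (T'.map (g · t)).prod).sum t := by
  induction T with
  | nil => exact hasDerivAt_const t 1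
  | cons κ T ih =>
    have := (hg κ (by simp)).fun_mul (ih fun κ' hκ' => hg κ' (by simp [hκ']))
    simp only [List.map_cons, List.prod_cons]
    refine this.congr_deriv ?_
    simp [consIntoBlock, Function.comp_def, List.sum_map_mul_left]

section IteratedDirDeriv

variable {E : Type*} [NormedAddCommGroup E] [NormedSpace ℝ E]

noncomputable def iteratedDirDeriv : List E → (E → ℝ) → E → ℝ
  | [], f => f
  | v :: vs, f => fun x => fderiv ℝ (iteratedDirDeriv vs f) x v

@[simp]
theorem iteratedDirDeriv_nil (f : E → ℝ) : iteratedDirDeriv [] f = f := rfl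

theorem iteratedDirDeriv_append (vs ws : List E) (f : E → ℝ) :
    iteratedDirDeriv (vs ++ ws) f = iteratedDirDeriv vs (iteratedDirDeriv ws f) := by
  induction vs with
  | nil => rfl
  | cons v vs ih => simp only [List.cons_append, iteratedDirDeriv, ih]

theorem contDiff_iteratedDirDeriv {f : E → ℝ} {vs : List E} {n : ℕ}
    (hf : ContDiff ℝ (vs.length + n : ℕ) f) : ContDiff ℝ n (iteratedDirDeriv vs f) := by
  induction vs generalizing n with
  | nil => simpa [iteratedDirDeriv] using hf
  | cons v vs ih =>
    have : ContDiff ℝ (n + 1 : ℕ) (iteratedDirDeriv vs f) :=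
      ih (by rwa [List.length_cons, add_right_comm, add_assoc] at hf)
    exact (this.fderiv_right (by norm_cast)).clm_apply contDiff_const

theorem iteratedDirDeriv_pair_comm {g : E → ℝ} (hg : ContDiff ℝ 2 g) (v w : E) :
    iteratedDirDeriv [v, w] g = iteratedDirDeriv [w, v] g := by
  have hdd : ∀ x, DifferentiableAt ℝ (fderiv ℝ g) x :=
    fun x => (hg.fderiv_right (m := 1) le_rfl).differentiable one_ne_zero x
  have hsecond : ∀ x u u', iteratedDirDeriv [u, u'] g x = fderiv ℝ (fderiv ℝ g) x u u' := by
    intro x u u'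
    simp [iteratedDirDeriv, fderiv_clm_apply (hdd x) (differentiableAt_const _)]
  funext x
  rw [hsecond, hsecond, (hg.contDiffAt.isSymmSndFDerivAt (by simp)) v w]

theorem iteratedDirDeriv_perm {f : E → ℝ} {vs ws : List E} (hf : ContDiff ℝ vs.length f)
    (hperm : vs.Perm ws) : iteratedDirDeriv vs f = iteratedDirDeriv ws f := by
  induction hperm with
  | nil => rfl
  | cons v _ ih =>
    simp only [iteratedDirDeriv, ih (hf.of_le (by simp))]
  | swap v w vs =>
    exact iteratedDirDeriv_pair_comm
      (contDiff_iteratedDirDeriv (by simpa [add_assoc, one_add_one_eq_two] using hf)) w v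
  | trans h₁₂ _ ih₁₂ ih₂₃ => rw [ih₁₂ hf, ih₂₃ (h₁₂.length_eq ▸ hf)]

theorem hasLineDerivAt_iteratedDirDeriv {f : E → ℝ} {vs : List E} {x : E}
    (hf : DifferentiableAt ℝ (iteratedDirDeriv vs f) x) (v : E) :
    HasLineDerivAt ℝ (iteratedDirDeriv vs f) (iteratedDirDeriv (v :: vs) f x) x v :=
  hf.hasFDerivAt.hasLineDerivAt v

theorem hasLineDerivAt_faaDiBrunoSum {h : E → ℝ} {vs : List E}
    (hh : ContDiff ℝ (vs.length + 1 : ℕ) h) (x v : E) :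
    HasLineDerivAt ℝ (fun y => faaDiBrunoSum (iteratedDirDeriv · h y) vs)
      ((faaDiBrunoTerms vs).map fun T => ((consIntoBlock v T).map fun T' =>
        (T'.map (iteratedDirDeriv · h x)).prod).sum).sum x v := by
  refine hasDerivAt_list_sum_map _ fun T hT => ?_
  have hblock : ∀ κ ∈ T, HasDerivAt (fun t : ℝ => iteratedDirDeriv κ h (x + t • v))
      (iteratedDirDeriv (v :: κ) h (x + (0 : ℝ) • v)) 0 := fun κ hκ => by
    have hκ : κ.length + 1 ≤ vs.length + 1 :=
      Nat.succ_le_succ (ne_nil_and_sublist_of_mem_faaDiBrunoTerms hT hκ).2.length_le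
    have hdiff := (contDiff_iteratedDirDeriv (n := 1) (hh.of_le (by exact_mod_cast hκ)))
      |>.differentiable one_ne_zero x
    simpa [HasLineDerivAt] using hasLineDerivAt_iteratedDirDeriv hdiff v
  simpa using hasDerivAt_list_prod_map_of_consIntoBlock T hblock

theorem iteratedDirDeriv_exp_comp {h : E → ℝ} {vs : List E} (hh : ContDiff ℝ vs.length h)
    (x : E) :
    iteratedDirDeriv vs (fun y => Real.exp (h y)) x =
      Real.exp (h x) * faaDiBrunoSum (iteratedDirDeriv · h x) vs := by
  induction vs generalizing x with
  | nil => simp [faaDiBrunoSum_nil]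
  | cons v vs ih =>
    have hexp : HasLineDerivAt ℝ (fun y => Real.exp (h y))
        (Real.exp (h x) * iteratedDirDeriv [v] h x) x v := by
      have hdiff := (contDiff_iteratedDirDeriv (vs := []) (n := 1)
        (hh.of_le (by simp))).differentiable one_ne_zero x
      simpa [HasLineDerivAt] using (hasLineDerivAt_iteratedDirDeriv hdiff v).exp
    have hdiff : DifferentiableAt ℝ (iteratedDirDeriv vs fun y => Real.exp (h y)) x :=
      (contDiff_iteratedDirDeriv (n := 1) (Real.contDiff_exp.comp hh)).differentiable
        one_ne_zero x
    calc iteratedDirDeriv (v :: vs) (fun y => Real.exp (h y)) x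
        = lineDeriv ℝ (iteratedDirDeriv vs fun y => Real.exp (h y)) x v :=
          hdiff.lineDeriv_eq_fderiv.symm
      _ = lineDeriv ℝ (fun y => Real.exp (h y) * faaDiBrunoSum (iteratedDirDeriv · h y) vs)
            x v := by
          rw [funext (ih (hh.of_le (by simp)))]
      _ = _ := HasLineDerivAt.lineDeriv (hexp.fun_mul (hasLineDerivAt_faaDiBrunoSum hh x v))
      _ = _ := by
          rw [faaDiBrunoSum_cons]
          simp only [zero_smul, add_zero]
          ring

theorem abs_iteratedDirDeriv_exp_comp_le {h : E → ℝ} {vs : List E}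
    (hh : ContDiff ℝ vs.length h) {x : E} {M : ℝ} (hM : 0 ≤ M)
    (hbound : ∀ κ : List E, κ ≠ [] → κ.Sublist vs → |iteratedDirDeriv κ h x| ≤ M) :
    |iteratedDirDeriv vs (fun y => Real.exp (h y)) x|
      ≤ (vs.length + M) ^ vs.length * Real.exp (h x) := by
  rw [iteratedDirDeriv_exp_comp hh, abs_mul, abs_of_pos (Real.exp_pos _), mul_comm]
  gcongr
  exact abs_faaDiBrunoSum_le hM hbound

end IteratedDirDeriv

section MultiIndex

variable {p : ℕ}

def multiIndexList (ν : Fin p → ℕ) : List (Fin p) :=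
  (List.finRange p).flatMap fun k => List.replicate (ν k) k

theorem length_multiIndexList (ν : Fin p → ℕ) : (multiIndexList ν).length = ∑ k, ν k := by
  simp [multiIndexList, List.length_flatMap, Fin.sum_univ_def]

theorem count_multiIndexList (ν : Fin p → ℕ) (k : Fin p) :
    (multiIndexList ν).count k = ν k := by
  rw [multiIndexList, List.count_flatMap, ← Fin.sum_univ_def]
  simp [List.count_replicate]

theorem pderiv_iterate_eq_iteratedDirDeriv (k : Fin p) (n : ℕ) (f : (Fin p → ℝ) → ℝ) :
    (pderiv p k)^[n] f = iteratedDirDeriv (List.replicate n (Pi.single k 1)) f := by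
  induction n with
  | zero => rfl
  | succ n ih => rw [Function.iterate_succ_apply', ih]; rfl

theorem mderiv_eq_iteratedDirDeriv (ν : Fin p → ℕ) (f : (Fin p → ℝ) → ℝ) :
    mderiv p ν f = iteratedDirDeriv ((multiIndexList ν).map fun k => Pi.single k 1) f := by
  rw [mderiv, multiIndexList]
  induction List.finRange p with
  | nil => rfl
  | cons k ks ih =>
    simp only [List.foldr_cons, List.flatMap_cons, List.map_append, iteratedDirDeriv_append,
      Function.comp_apply, ih, List.map_replicate, pderiv_iterate_eq_iteratedDirDeriv]

theorem perm_multiIndexList_count (κ : List (Fin p)) :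
    (multiIndexList fun k => κ.count k).Perm κ :=
  List.perm_iff_count.2 fun k => count_multiIndexList _ k

theorem sum_count_eq_length (κ : List (Fin p)) : ∑ k, κ.count k = κ.length := by
  rw [← length_multiIndexList, (perm_multiIndexList_count κ).length_eq]

theorem mderiv_count_eq_iteratedDirDeriv {f : (Fin p → ℝ) → ℝ} {κ : List (Fin p)}
    (hf : ContDiff ℝ κ.length f) :
    mderiv p (fun k => κ.count k) f = iteratedDirDeriv (κ.map fun k => Pi.single k 1) f := by
  rw [mderiv_eq_iteratedDirDeriv]
  exact iteratedDirDeriv_perm (by simpa [sum_count_eq_length, length_multiIndexList] using hf)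
    ((perm_multiIndexList_count κ).map _)

theorem abs_mderiv_exp_comp_le {f : (Fin p → ℝ) → ℝ} {ν : Fin p → ℕ}
    (hf : ContDiff ℝ (∑ k, ν k : ℕ) f) {x : Fin p → ℝ} {M : ℝ} (hM : 0 ≤ M)
    (hbound : ∀ μ : Fin p → ℕ, 1 ≤ ∑ k, μ k → ∑ k, μ k ≤ ∑ k, ν k →
      |mderiv p μ f x| ≤ M) :
    |mderiv p ν (fun y => Real.exp (f y)) x|
      ≤ ((∑ k, ν k : ℕ) + M) ^ (∑ k, ν k) * Real.exp (f x) := by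
  have hlen : ((multiIndexList ν).map fun k => (Pi.single k 1 : Fin p → ℝ)).length
      = ∑ k, ν k := by
    rw [List.length_map, length_multiIndexList]
  rw [mderiv_eq_iteratedDirDeriv, ← hlen]
  refine abs_iteratedDirDeriv_exp_comp_le (hlen ▸ hf) hM fun κ hne hsub => ?_
  obtain ⟨κ, hκ, rfl⟩ := List.sublist_map_iff.1 hsub
  have hκν : κ.length ≤ ∑ k, ν k := length_multiIndexList ν ▸ hκ.length_le
  rw [← mderiv_count_eq_iteratedDirDeriv (hf.of_le (by exact_mod_cast hκν))]
  refine hbound _ ?_ ?_ <;> rw [sum_count_eq_length]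
  · exact List.length_pos_iff.2 (by simpa using hne)
  · exact hκν

end MultiIndex

theorem stmt4_general (p l : ℕ)
    (h : (Fin p → ℝ) → ℝ) (hh : ContDiff ℝ l h)
    (ε : Fin p → ℝ) (M : ℝ) (hM : 0 ≤ M)
    (hbound : ∀ᶠ ε' in nhds ε, ∀ μ : Fin p → ℕ,
      1 ≤ ∑ k, μ k → ∑ k, μ k ≤ l → |mderiv p μ h ε'| ≤ M) :
    ∀ ν : Fin p → ℕ, ∑ k, ν k = l →
      |mderiv p ν (fun x => Real.exp (h x)) ε| ≤ ((l : ℝ) + M) ^ l * Real.exp (h ε) := by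
  rintro ν rfl
  exact abs_mderiv_exp_comp_le hh hM hbound.self_of_nhds

/-- Let `p ≥ 1`, `l ≥ 1`, `h : ℝ^p → ℝ` be `l`-times continuously
differentiable and `ε ∈ ℝ^p`.  If `M ≥ 0` bounds `|h^{(μ)}|` for all multi-indices `μ`
with `1 ≤ |μ| ≤ l`, at all points in a neighborhood of `ε`, then for every multi-index
`ν` with `|ν| = l`, `|(e^h)^{(ν)}(ε)| ≤ (l + M)^l · e^{h(ε)}`. -/
theorem stmt4 (p l : ℕ) (hp : 1 ≤ p) (hl : 1 ≤ l)
    (h : (Fin p → ℝ) → ℝ) (hh : ContDiff ℝ l h)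
    (ε : Fin p → ℝ) (M : ℝ) (hM : 0 ≤ M)
    (hbound : ∀ᶠ ε' in nhds ε, ∀ μ : Fin p → ℕ,
      1 ≤ ∑ k, μ k → ∑ k, μ k ≤ l → |mderiv p μ h ε'| ≤ M) :
    ∀ ν : Fin p → ℕ, ∑ k, ν k = l →
      |mderiv p ν (fun x => Real.exp (h x)) ε| ≤ ((l : ℝ) + M) ^ l * Real.exp (h ε) :=
  stmt4_general p l h hh ε M hM hbound
end

section
/- Let (M_t)_{t∈ℤ} be independent, identically distributed nonnegative real random variables on a probability space, let q ≥ 1 be an integer, and suppose there is a constant c > 2 such that P(M_0 ≥ u) = O((log u)^{-c}) as u → ∞. Then almost surely, for every β > 1, β^{-n} · n · max_{|t| ≤ n} (q + M_t)^q → 0 as n → ∞. -/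
/-!
For `ε > 0`, identical distribution and the tail bound give
`P(M t ≥ exp (ε |t|)) ≤ C ε^(-c) |t|^(-c)`, which is summable over `ℤ` since `c > 1`; by
Borel–Cantelli, almost surely `M t < exp (ε |t|)` for all but finitely many `t`, simultaneously
for all `ε > 0`. Hence `max_{|t| ≤ n} M t ≤ exp (ε n)` for large `n`, and
`n (q + exp (ε n))^q ≤ (q + 1)^q n exp (q ε n)` is killed by `β^(-n)` once `exp (q ε) < β`.
-/

open MeasureTheory ProbabilityTheory Filter Real Topology

lemma Int.tendsto_abs_cofinite_atTop : Tendsto (fun t : ℤ => |(t : ℝ)|) cofinite atTop := by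
  have h := tendsto_norm_cocompact_atTop (E := ℤ)
  rw [cocompact_eq_cofinite] at h
  exact h.congr Int.norm_eq_abs

section BorelCantelli

variable {Ω : Type*} [MeasurableSpace Ω] {μ : Measure Ω} [IsFiniteMeasure μ]
  {M : ℤ → Ω → ℝ} {Y : Ω → ℝ} {C u₀ c : ℝ}

lemma tsum_measure_exp_mul_abs_le_ne_top (hident : ∀ t, IdentDistrib (M t) Y μ μ) (hc : 1 < c)
    (htail : ∀ u ≥ u₀, (μ {ω | u ≤ Y ω}).toReal ≤ C * log u ^ (-c)) {ε : ℝ} (hε : 0 < ε) :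
    ∑' t : ℤ, μ {ω | exp (ε * |(t : ℝ)|) ≤ M t ω} ≠ ⊤ := by
  set s := fun t : ℤ => {ω | exp (ε * |(t : ℝ)|) ≤ M t ω}
  have hbound : ∀ᶠ t in cofinite, ‖(μ (s t)).toReal‖ ≤ C * ε ^ (-c) * |(t : ℝ)| ^ (-c) := by
    filter_upwards [(tendsto_exp_atTop.comp
      (Int.tendsto_abs_cofinite_atTop.const_mul_atTop hε)).eventually_ge_atTop u₀] with t ht
    have hident_t : μ (s t) = μ {ω | exp (ε * |(t : ℝ)|) ≤ Y ω} :=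
      (hident t).measure_mem_eq measurableSet_Ici
    rw [Real.norm_of_nonneg ENNReal.toReal_nonneg, hident_t, mul_assoc,
      ← mul_rpow hε.le (abs_nonneg _)]
    simpa using htail _ ht
  have hsum : Summable fun t => (μ (s t)).toNNReal.toReal :=
    ((summable_abs_int_rpow hc).mul_left _).of_norm_bounded_eventually hbound
  simpa only [ENNReal.coe_toNNReal (measure_ne_top μ _)] using
    ENNReal.tsum_coe_ne_top_iff_summable_coe.2 hsum

lemma ae_eventually_lt_exp_mul_abs (hident : ∀ t, IdentDistrib (M t) Y μ μ) (hc : 1 < c)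
    (htail : ∀ u ≥ u₀, (μ {ω | u ≤ Y ω}).toReal ≤ C * log u ^ (-c)) {ε : ℝ} (hε : 0 < ε) :
    ∀ᵐ ω ∂μ, ∀ᶠ t in cofinite, M t ω < exp (ε * |(t : ℝ)|) := by
  filter_upwards [ae_finite_setOfPred_mem
    (tsum_measure_exp_mul_abs_le_ne_top hident hc htail hε)] with ω hω
  exact eventually_cofinite.2 (by simpa only [not_lt] using hω)

lemma ae_forall_pos_eventually_lt_exp_mul_abs (hident : ∀ t, IdentDistrib (M t) Y μ μ)
    (hc : 1 < c) (htail : ∀ u ≥ u₀, (μ {ω | u ≤ Y ω}).toReal ≤ C * log u ^ (-c)) :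
    ∀ᵐ ω ∂μ, ∀ ε > 0, ∀ᶠ t in cofinite, M t ω < exp (ε * |(t : ℝ)|) := by
  have h := ae_all_iff.2 fun k : ℕ =>
    ae_eventually_lt_exp_mul_abs hident hc htail (Nat.one_div_pos_of_nat (n := k))
  filter_upwards [h] with ω hω ε hε
  obtain ⟨k, hk⟩ := exists_nat_one_div_lt hε
  filter_upwards [hω k] with t ht
  exact ht.trans_le (exp_le_exp.2 (by gcongr))

end BorelCantelli

lemma eventually_forall_Icc_le_exp {m : ℤ → ℝ} {ε : ℝ} (hε : 0 < ε)
    (hm : ∀ᶠ t in cofinite, m t < exp (ε * |(t : ℝ)|)) :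
    ∀ᶠ n : ℕ in atTop, ∀ t ∈ Finset.Icc (-(n : ℤ)) n, m t ≤ exp (ε * n) := by
  obtain ⟨K, hK⟩ := ((eventually_cofinite.1 hm).image m).bddAbove
  have hexp : Tendsto (fun n : ℕ => exp (ε * n)) atTop atTop :=
    tendsto_exp_atTop.comp (tendsto_natCast_atTop_atTop.const_mul_atTop hε)
  filter_upwards [hexp.eventually_ge_atTop K] with n hn t ht
  by_cases htm : m t < exp (ε * |(t : ℝ)|)
  · have htn : |t| ≤ (n : ℤ) := abs_le.2 (Finset.mem_Icc.1 ht)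
    have htn' : |(t : ℝ)| ≤ n := by exact_mod_cast htn
    exact htm.le.trans (exp_le_exp.2 (by gcongr))
  · exact (hK ⟨t, htm, rfl⟩).trans hn

lemma tendsto_inv_pow_mul_natCast_mul_of_le_pow_exp {b : ℕ → ℝ} {β : ℝ} (hβ : 1 < β) (q : ℕ)
    (hb0 : ∀ n, 0 ≤ b n) (hb : ∀ ε > 0, ∀ᶠ n in atTop, b n ≤ (q + exp (ε * n)) ^ q) :
    Tendsto (fun n : ℕ => (β ^ n)⁻¹ * (n * b n)) atTop (𝓝 0) := by
  have hβ0 : 0 < β := by linarith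
  set ε := log β / (q + 1)
  have hε : 0 < ε := div_pos (log_pos hβ) (by positivity)
  set r := exp (q * ε) / β
  have hr1 : r < 1 := by
    rw [div_lt_one hβ0, ← lt_log_iff_exp_lt hβ0]
    have : log β = (q + 1) * ε := by simp only [ε]; field_simp
    nlinarith
  have hlim := (tendsto_self_mul_const_pow_of_lt_one (by positivity) hr1).const_mul
    (((q : ℝ) + 1) ^ q)
  rw [mul_zero] at hlim
  refine squeeze_zero' (Eventually.of_forall fun n => ?_) ?_ hlim
  · exact mul_nonneg (by positivity) (mul_nonneg n.cast_nonneg (hb0 n))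
  filter_upwards [hb ε hε] with n hn
  have he : 1 ≤ exp (ε * n) := one_le_exp (by positivity)
  have hpow : (q + exp (ε * n)) ^ q ≤ ((q + 1) * exp (ε * n)) ^ q :=
    pow_le_pow_left₀ (by positivity) (by nlinarith) q
  calc (β ^ n)⁻¹ * (n * b n) ≤ (β ^ n)⁻¹ * (n * ((q + 1) * exp (ε * n)) ^ q) := by
        gcongr; exact hn.trans hpow
    _ = ((q : ℝ) + 1) ^ q * (n * r ^ n) := by
        rw [mul_pow, ← exp_nat_mul, div_pow, ← exp_nat_mul]
        field_simp

/-- Let `(M t)_{t ∈ ℤ}` be i.i.d. nonnegative real random variables,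
`q ≥ 1` an integer, and suppose there is a constant `c > 2` with
`P(M 0 ≥ u) = O((log u)^{-c})` as `u → ∞`.  Then almost surely, for every `β > 1`,
`β^{-n} · n · max_{|t| ≤ n} (q + M t)^q → 0` as `n → ∞`. -/
theorem stmt5 {Ω : Type*} [MeasurableSpace Ω] (μ : Measure Ω) [IsProbabilityMeasure μ]
    (M : ℤ → Ω → ℝ)
    (hnonneg : ∀ t ω, 0 ≤ M t ω)
    (hident : ∀ t, IdentDistrib (M t) (M 0) μ μ)
    (q : ℕ) (c : ℝ) (hc : 2 < c)
    (htail : ∃ C u₀ : ℝ, ∀ u ≥ u₀,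
      (μ {ω | u ≤ M 0 ω}).toReal ≤ C * Real.log u ^ (-c)) :
    ∀ᵐ ω ∂μ, ∀ β : ℝ, 1 < β →
      Tendsto (fun n : ℕ => (β ^ n)⁻¹ * ((n : ℝ) *
          (Finset.Icc (-(n : ℤ)) (n : ℤ)).sup'
            ⟨0, Finset.mem_Icc.mpr (by omega)⟩ fun t => ((q : ℝ) + M t ω) ^ q))
        atTop (nhds 0) := by
  obtain ⟨C, u₀, hC⟩ := htail
  filter_upwards [ae_forall_pos_eventually_lt_exp_mul_abs hident (by linarith) hC] with ω hω β hβ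
  refine tendsto_inv_pow_mul_natCast_mul_of_le_pow_exp hβ q (fun n => ?_) fun ε hε => ?_
  · have h0 : (0 : ℤ) ∈ Finset.Icc (-(n : ℤ)) n := Finset.mem_Icc.2 (by omega)
    exact (pow_nonneg (by linarith [hnonneg 0 ω]) q).trans
      (Finset.le_sup' (fun t => ((q : ℝ) + M t ω) ^ q) h0)
  · filter_upwards [eventually_forall_Icc_le_exp hε (hω ε hε)] with n hn
    exact Finset.sup'_le _ _ fun t ht =>
      pow_le_pow_left₀ (by linarith [hnonneg t ω]) (by linarith [hn t ht]) q
end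

section
/- Let H be a finite nonempty set, let L : H × H → ℝ and M : H × H → ℝ have strictly positive entries, let ψ : H → (0,∞), and define L' by L'(a,b) = ψ(b) · Σ_{e∈H} L(a,e) M(e,b). Set γ(M) = 1 − (min_{c,d,e∈H} M(e,d)/M(e,c)) / (max_{c,d,e∈H} M(e,d)/M(e,c)); then γ(M) ∈ [0,1] and Δ(L') ≤ γ(M) · Δ(L); in particular Δ(L') ≤ Δ(L). -/
/-- For a matrix `K : H × H → ℝ` with positive entries,
`Delta K = max_{a,b,c,d} |K b c / K a c − K b d / K a d|`. -/
noncomputable def Delta {H : Type*} [Fintype H] [Nonempty H] (K : H → H → ℝ) : ℝ :=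
  Finset.univ.sup' Finset.univ_nonempty fun x : (H × H) × H × H =>
    |K x.1.2 x.2.1 / K x.1.1 x.2.1 - K x.1.2 x.2.2 / K x.1.1 x.2.2|

/-- `gammaM M = 1 − (min_{c,d,e} M e d / M e c) / (max_{c,d,e} M e d / M e c)`. -/
noncomputable def gammaM {H : Type*} [Fintype H] [Nonempty H] (M : H → H → ℝ) : ℝ :=
  1 - (Finset.univ.inf' Finset.univ_nonempty fun x : (H × H) × H =>
        M x.2 x.1.2 / M x.2 x.1.1) /
      (Finset.univ.sup' Finset.univ_nonempty fun x : (H × H) × H =>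
        M x.2 x.1.2 / M x.2 x.1.1)

/-!
`L'(b,c) / L'(a,c)` does not see `ψ`, and is the mean of `ρ e = L(b,e) / L(a,e)` under the
probability weights `pᶜ e ∝ L(a,e) M(e,c)`. With `θ = min / max` of the ratios `M(e,d) / M(e,c)`,
the weights of any two columns dominate each other up to the factor `θ`, i.e. `θ pᵈ ≤ pᶜ`. The
means of `ρ` under two such weights differ by at most `(1 - θ)` times the oscillation of `ρ`,
and that oscillation is at most `Δ(L)`; since `1 - θ = γ(M)`, this gives `Δ(L') ≤ γ(M) Δ(L)`.
-/

open Finset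

section WeightedMean

variable {ι : Type*} [Fintype ι]

lemma sum_mul_sub_sum_mul_le {p q ρ : ι → ℝ} {θ m K : ℝ} (hq : ∀ i, 0 ≤ q i)
    (hp1 : ∑ i, p i = 1) (hq1 : ∑ i, q i = 1) (hθ : ∀ i, θ * q i ≤ p i)
    (hm : ∀ i, m ≤ ρ i) (hK : ∀ i, ρ i ≤ K) :
    ∑ i, p i * ρ i - ∑ i, q i * ρ i ≤ (1 - θ) * (K - m) := by
  have hθ1 : θ ≤ 1 := by
    simpa [← mul_sum, hq1, hp1] using sum_le_sum fun i (_ : i ∈ univ) => hθ i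
  have hsplit : ∑ i, p i * ρ i - ∑ i, q i * ρ i =
      ∑ i, (p i - θ * q i) * (ρ i - m) - (1 - θ) * ∑ i, q i * (ρ i - m) := by
    simp only [sub_mul, mul_sub, sum_sub_distrib, ← sum_mul, ← mul_sum, hp1, hq1, mul_assoc]
    ring
  have hupper : ∑ i, (p i - θ * q i) * (ρ i - m) ≤ (1 - θ) * (K - m) :=
    calc ∑ i, (p i - θ * q i) * (ρ i - m) ≤ ∑ i, (p i - θ * q i) * (K - m) :=
          sum_le_sum fun i _ => mul_le_mul_of_nonneg_left (by linarith [hK i])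
            (sub_nonneg.2 (hθ i))
      _ = (1 - θ) * (K - m) := by rw [← sum_mul, sum_sub_distrib, ← mul_sum, hp1, hq1, mul_one]
  have hlower : 0 ≤ ∑ i, q i * (ρ i - m) :=
    sum_nonneg fun i _ => mul_nonneg (hq i) (sub_nonneg.2 (hm i))
  rw [hsplit]
  linarith [mul_nonneg (sub_nonneg.2 hθ1) hlower]

lemma sum_mul_div_sum_mul_eq_sum {u v w : ι → ℝ} (hu : ∀ i, u i ≠ 0) :
    (∑ i, v i * w i) / ∑ i, u i * w i =
      ∑ i, u i * w i / (∑ j, u j * w j) * (v i / u i) := by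
  rw [sum_div]
  refine sum_congr rfl fun i _ => ?_
  field_simp [hu i]

lemma div_mul_normalized_le_normalized [Nonempty ι] {x y z : ι → ℝ} {m K : ℝ}
    (hx : ∀ i, 0 < x i) (hz : ∀ i, 0 < z i) (hm : ∀ i, m * y i ≤ z i)
    (hK : ∀ i, z i ≤ K * y i) (i : ι) :
    m / K * (x i * y i / ∑ j, x j * y j) ≤ x i * z i / ∑ j, x j * z j := by
  have hsum : ∑ j, x j * z j ≤ K * ∑ j, x j * y j := by
    rw [mul_sum]
    exact sum_le_sum fun j _ => by nlinarith [hx j, hK j]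
  rw [div_mul_div_comm, ← mul_assoc, mul_comm m]
  exact div_le_div₀ (mul_pos (hx i) (hz i)).le (by rw [mul_assoc]; nlinarith [hx i, hm i])
    (sum_pos (fun j _ => mul_pos (hx j) (hz j)) univ_nonempty) hsum

end WeightedMean

section Ratios

variable {H : Type*} [Fintype H] [Nonempty H]

noncomputable def minRatio (M : H → H → ℝ) : ℝ :=
  univ.inf' univ_nonempty fun x : (H × H) × H => M x.2 x.1.2 / M x.2 x.1.1

noncomputable def maxRatio (M : H → H → ℝ) : ℝ :=
  univ.sup' univ_nonempty fun x : (H × H) × H => M x.2 x.1.2 / M x.2 x.1.1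

lemma gammaM_eq (M : H → H → ℝ) : gammaM M = 1 - minRatio M / maxRatio M := rfl

variable {M : H → H → ℝ}

lemma minRatio_mul_le (hM : ∀ a b, 0 < M a b) (c d e : H) : minRatio M * M e c ≤ M e d :=
  (le_div_iff₀ (hM e c)).1 <| inf'_le (fun x : (H × H) × H => M x.2 x.1.2 / M x.2 x.1.1)
    (mem_univ ((c, d), e))

lemma le_maxRatio_mul (hM : ∀ a b, 0 < M a b) (c d e : H) : M e d ≤ maxRatio M * M e c :=
  (div_le_iff₀ (hM e c)).1 <| le_sup' (fun x : (H × H) × H => M x.2 x.1.2 / M x.2 x.1.1)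
    (mem_univ ((c, d), e))

lemma minRatio_pos (hM : ∀ a b, 0 < M a b) : 0 < minRatio M := by
  obtain ⟨x, -, hx⟩ := exists_mem_eq_inf' univ_nonempty
    fun x : (H × H) × H => M x.2 x.1.2 / M x.2 x.1.1
  rw [minRatio, hx]
  exact div_pos (hM _ _) (hM _ _)

lemma minRatio_le_maxRatio (M : H → H → ℝ) : minRatio M ≤ maxRatio M :=
  (inf'_le _ (mem_univ (Classical.arbitrary _))).trans
    (le_sup' (fun x : (H × H) × H => M x.2 x.1.2 / M x.2 x.1.1) (mem_univ _))

lemma gammaM_nonneg (hM : ∀ a b, 0 < M a b) : 0 ≤ gammaM M := by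
  rw [gammaM_eq, sub_nonneg]
  exact div_le_one_of_le₀ (minRatio_le_maxRatio M)
    ((minRatio_pos hM).le.trans (minRatio_le_maxRatio M))

lemma gammaM_le_one (hM : ∀ a b, 0 < M a b) : gammaM M ≤ 1 := by
  rw [gammaM_eq, sub_le_self_iff]
  exact div_nonneg (minRatio_pos hM).le ((minRatio_pos hM).le.trans (minRatio_le_maxRatio M))

end Ratios

section Delta

variable {H : Type*} [Fintype H] [Nonempty H]

lemma abs_div_sub_div_le_Delta (L : H → H → ℝ) (a b c d : H) :
    |L b c / L a c - L b d / L a d| ≤ Delta L :=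
  le_sup' (fun x : (H × H) × H × H =>
    |L x.1.2 x.2.1 / L x.1.1 x.2.1 - L x.1.2 x.2.2 / L x.1.1 x.2.2|) (mem_univ ((a, b), c, d))

lemma Delta_nonneg (L : H → H → ℝ) : 0 ≤ Delta L :=
  (abs_nonneg _).trans (abs_div_sub_div_le_Delta L (Classical.arbitrary H) (Classical.arbitrary H)
    (Classical.arbitrary H) (Classical.arbitrary H))

variable {L M : H → H → ℝ}

lemma sum_div_sum_sub_sum_div_sum_le (hL : ∀ a b, 0 < L a b) (hM : ∀ a b, 0 < M a b)
    (a b c d : H) :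
    (∑ e, L b e * M e c) / (∑ e, L a e * M e c) - (∑ e, L b e * M e d) / (∑ e, L a e * M e d)
      ≤ gammaM M * Delta L := by
  set p : H → H → ℝ := fun c e => L a e * M e c / ∑ j, L a j * M j c
  set ρ : H → ℝ := fun e => L b e / L a e
  have hp_nonneg (c e : H) : 0 ≤ p c e :=
    div_nonneg (mul_pos (hL a e) (hM e c)).le
      (sum_pos (fun j _ => mul_pos (hL a j) (hM j c)) univ_nonempty).le
  have hp_sum (c : H) : ∑ e, p c e = 1 := by
    rw [← sum_div, div_self (sum_pos (fun j _ => mul_pos (hL a j) (hM j c)) univ_nonempty).ne']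
  have hp_dom (e : H) : minRatio M / maxRatio M * p d e ≤ p c e :=
    div_mul_normalized_le_normalized (hL a) (hM · c) (minRatio_mul_le hM d c)
      (le_maxRatio_mul hM d c) e
  have hmean (c : H) : (∑ e, L b e * M e c) / (∑ e, L a e * M e c) = ∑ e, p c e * ρ e :=
    sum_mul_div_sum_mul_eq_sum fun e => (hL a e).ne'
  obtain ⟨emin, hemin⟩ := Finite.exists_min ρ
  obtain ⟨emax, hemax⟩ := Finite.exists_max ρ
  have hosc : ρ emax - ρ emin ≤ Delta L :=
    (le_abs_self _).trans (abs_div_sub_div_le_Delta L a b emax emin)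
  rw [hmean, hmean, gammaM_eq]
  exact (sum_mul_sub_sum_mul_le (hp_nonneg d) (hp_sum c) (hp_sum d) hp_dom hemin hemax).trans
    (mul_le_mul_of_nonneg_left hosc (by simpa only [gammaM_eq] using gammaM_nonneg hM))

lemma Delta_mul_le (hL : ∀ a b, 0 < L a b) (hM : ∀ a b, 0 < M a b) {ψ : H → ℝ}
    (hψ : ∀ b, 0 < ψ b) :
    Delta (fun a b => ψ b * ∑ e, L a e * M e b) ≤ gammaM M * Delta L := by
  refine sup'_le _ _ fun ⟨⟨a, b⟩, c, d⟩ _ => ?_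
  simp only [mul_div_mul_left _ _ (hψ c).ne', mul_div_mul_left _ _ (hψ d).ne', abs_sub_le_iff]
  exact ⟨sum_div_sum_sub_sum_div_sum_le hL hM a b c d,
    sum_div_sum_sub_sum_div_sum_le hL hM a b d c⟩

end Delta

/-- Let `H` be finite nonempty, `L`, `M : H × H → ℝ` with strictly
positive entries, `ψ : H → (0,∞)`, and `L' a b = ψ b · ∑_e L a e · M e b`.  Then
`γ(M) ∈ [0,1]`, `Δ(L') ≤ γ(M) · Δ(L)`, and in particular `Δ(L') ≤ Δ(L)`. -/
theorem stmt6 {H : Type*} [Fintype H] [Nonempty H]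
    (L M : H → H → ℝ) (hL : ∀ a b, 0 < L a b) (hM : ∀ a b, 0 < M a b)
    (ψ : H → ℝ) (hψ : ∀ b, 0 < ψ b) :
    0 ≤ gammaM M ∧ gammaM M ≤ 1 ∧
      Delta (fun a b => ψ b * ∑ e, L a e * M e b) ≤ gammaM M * Delta L ∧
      Delta (fun a b => ψ b * ∑ e, L a e * M e b) ≤ Delta L := by
  have hmain := Delta_mul_le hL hM hψ
  refine ⟨gammaM_nonneg hM, gammaM_le_one hM, hmain, hmain.trans ?_⟩
  exact mul_le_of_le_one_left (Delta_nonneg L) (gammaM_le_one hM)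
end

section
/- Let σ = (σ_0,…,σ_n) be a binary Markov chain as in the context, and for t = 1,…,n let ℓ_t : ℝ × {0,1} → ℝ be such that ε ↦ ℓ_t(ε,a) is differentiable for a = 0,1, with ℓ_t(0,1) = ℓ_t(0,0). Define d_t(ε) = ℓ_t(ε,1) − ℓ_t(ε,0), S_n(ε) = Σ_{t=1}^n ℓ_t(ε,σ_t), and λ_n(ε) = ln E[e^{S_n(ε)} | σ_0 = 1] − ln E[e^{S_n(ε)} | σ_0 = 0]. Then λ_n is differentiable at 0 and λ_n'(0) = Σ_{t=1}^n D_{0t} · d_t'(0). -/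
/-- The weight `π(v₀) ∏_{t=1}^n Q_t(v_{t−1}, v_t)` of a path `v` of a (possibly
time-inhomogeneous) binary Markov chain `σ₀, …, σ_n` with initial law `π` and one-step
transition matrices `Q_t`. -/
noncomputable def pathWeight (n : ℕ) (π : Fin 2 → ℝ) (Q : ℕ → Fin 2 → Fin 2 → ℝ)
    (v : Fin (n + 1) → Fin 2) : ℝ :=
  π (v 0) * ∏ t : Fin n, Q (t.1 + 1) (v t.castSucc) (v t.succ)

/-- The conditional expectation `E[F(σ) | σ_s = a]`, a finite weighted sum over paths
with `σ_s = a`. -/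
noncomputable def condExp' (n : ℕ) (π : Fin 2 → ℝ) (Q : ℕ → Fin 2 → Fin 2 → ℝ)
    (s : Fin (n + 1)) (a : Fin 2) (F : (Fin (n + 1) → Fin 2) → ℝ) : ℝ :=
  (∑ v : Fin (n + 1) → Fin 2, if v s = a then pathWeight n π Q v * F v else 0) /
    (∑ v : Fin (n + 1) → Fin 2, if v s = a then pathWeight n π Q v else 0)

/-- The conditional probability `P_{st}(a,b) = P(σ_t = b | σ_s = a)`. -/
noncomputable def condProb (n : ℕ) (π : Fin 2 → ℝ) (Q : ℕ → Fin 2 → Fin 2 → ℝ)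
    (s t : Fin (n + 1)) (a b : Fin 2) : ℝ :=
  condExp' n π Q s a fun v => if v t = b then 1 else 0

/-!
At `ε = 0` every path has the same score `S_n(0)`, so differentiating
`ln E[e^{S_n(ε)} | σ₀ = a]` there gives the plain conditional mean `E[S_n'(0) | σ₀ = a]`.
Writing `ℓ_t'(0, b) = ℓ_t'(0, 0) + d_t'(0) 𝟙[b = 1]`, this mean is
`∑_t (ℓ_t'(0, 0) + d_t'(0) P_{0t}(a, 1))`, and the terms not involving `a` cancel in `λ_n'(0)`.
-/

open Finset

theorem hasDerivAt_log_weightedMean_exp {ι : Type*} [Fintype ι] {w : ι → ℝ}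
    (hw : ∑ i, w i ≠ 0) {S : ι → ℝ → ℝ} {S' : ι → ℝ} {x c : ℝ}
    (hS : ∀ i, HasDerivAt (S i) (S' i) x) (hSx : ∀ i, S i x = c) :
    HasDerivAt (fun ε => Real.log ((∑ i, w i * Real.exp (S i ε)) / ∑ i, w i))
      ((∑ i, w i * S' i) / ∑ i, w i) x := by
  have hN : HasDerivAt (fun ε => ∑ i, w i * Real.exp (S i ε))
      (Real.exp c * ∑ i, w i * S' i) x := by
    rw [mul_sum]
    refine HasDerivAt.fun_sum fun i _ => ?_
    have := ((hS i).exp).const_mul (w i)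
    rwa [hSx, mul_left_comm] at this
  have hNx : ∑ i, w i * Real.exp (S i x) = Real.exp c * ∑ i, w i := by
    rw [mul_comm, sum_mul]
    simp only [hSx]
  convert (hN.div_const _).log (by rw [hNx]; positivity) using 1
  rw [hNx]
  field_simp

section MarkovChain

variable {n : ℕ} {π : Fin 2 → ℝ} {Q : ℕ → Fin 2 → Fin 2 → ℝ}

variable (n π Q) in
noncomputable def condWeight (s : Fin (n + 1)) (a : Fin 2) (v : Fin (n + 1) → Fin 2) : ℝ :=
  if v s = a then pathWeight n π Q v else 0

theorem condExp'_eq_sum_div (s : Fin (n + 1)) (a : Fin 2) (F : (Fin (n + 1) → Fin 2) → ℝ) :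
    condExp' n π Q s a F =
      (∑ v, condWeight n π Q s a v * F v) / ∑ v, condWeight n π Q s a v := by
  simp only [condExp', condWeight, ite_mul, zero_mul]

theorem sum_condWeight_pos (hπ : ∀ a, 0 < π a) (hQpos : ∀ t a b, 0 < Q t a b)
    (s : Fin (n + 1)) (a : Fin 2) : 0 < ∑ v, condWeight n π Q s a v := by
  have hpath : ∀ v, 0 < pathWeight n π Q v := fun v =>
    mul_pos (hπ _) (prod_pos fun _ _ => hQpos _ _ _)
  refine sum_pos' (fun v _ => ?_) ⟨fun _ => a, mem_univ _, by simp [condWeight, hpath]⟩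
  unfold condWeight
  split_ifs
  exacts [(hpath v).le, le_rfl]

theorem condExp'_sum {ι : Type*} (T : Finset ι) (s : Fin (n + 1)) (a : Fin 2)
    (F : ι → (Fin (n + 1) → Fin 2) → ℝ) :
    condExp' n π Q s a (fun v => ∑ t ∈ T, F t v) = ∑ t ∈ T, condExp' n π Q s a (F t) := by
  simp only [condExp'_eq_sum_div, mul_sum]
  rw [sum_comm, sum_div]

theorem condExp'_comp_eval (hπ : ∀ a, 0 < π a) (hQpos : ∀ t a b, 0 < Q t a b)
    (s t : Fin (n + 1)) (a : Fin 2) (f : Fin 2 → ℝ) :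
    condExp' n π Q s a (fun v => f (v t)) = f 0 + (f 1 - f 0) * condProb n π Q s t a 1 := by
  have hf : ∀ b : Fin 2, f b = f 0 + (f 1 - f 0) * if b = 1 then 1 else 0 := by
    intro b
    fin_cases b <;> simp
  have hZ := (sum_condWeight_pos hπ hQpos s a).ne'
  have hsum : ∑ v, condWeight n π Q s a v * f (v t) =
      f 0 * ∑ v, condWeight n π Q s a v +
        (f 1 - f 0) * ∑ v, condWeight n π Q s a v * if v t = 1 then 1 else 0 := by
    rw [mul_sum, mul_sum, ← sum_add_distrib]
    refine sum_congr rfl fun v _ => ?_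
    rw [hf (v t)]
    ring
  rw [condProb, condExp'_eq_sum_div, condExp'_eq_sum_div, hsum]
  field_simp

end MarkovChain

theorem stmt10_general (n : ℕ) (π : Fin 2 → ℝ) (Q : ℕ → Fin 2 → Fin 2 → ℝ)
    (hπ : ∀ a, 0 < π a)
    (hQpos : ∀ t a b, 0 < Q t a b)
    (ℓ : ℕ → ℝ → Fin 2 → ℝ)
    (hdiff : ∀ t ∈ Finset.Icc 1 n, ∀ a, Differentiable ℝ fun ε => ℓ t ε a)
    (h0 : ∀ t ∈ Finset.Icc 1 n, ℓ t 0 1 = ℓ t 0 0) :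
    HasDerivAt (fun ε =>
        Real.log (condExp' n π Q 0 1 fun v =>
          Real.exp (∑ t : Fin n, ℓ (t.1 + 1) ε (v t.succ))) -
        Real.log (condExp' n π Q 0 0 fun v =>
          Real.exp (∑ t : Fin n, ℓ (t.1 + 1) ε (v t.succ))))
      (∑ t : Fin n,
        (condProb n π Q 0 t.succ 1 1 - condProb n π Q 0 t.succ 0 1) *
          deriv (fun ε => ℓ (t.1 + 1) ε 1 - ℓ (t.1 + 1) ε 0) 0) 0 := by
  have hIcc (t : Fin n) : t.1 + 1 ∈ Icc 1 n := mem_Icc.2 ⟨Nat.le_add_left 1 t.1, t.2⟩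
  set g : Fin n → Fin 2 → ℝ := fun t b => deriv (fun ε => ℓ (t.1 + 1) ε b) 0
  have hℓ0 (t : Fin n) (b : Fin 2) : ℓ (t.1 + 1) 0 b = ℓ (t.1 + 1) 0 0 := by
    fin_cases b
    exacts [rfl, h0 _ (hIcc t)]
  have hlog (a : Fin 2) : HasDerivAt
      (fun ε => Real.log (condExp' n π Q 0 a fun v =>
        Real.exp (∑ t : Fin n, ℓ (t.1 + 1) ε (v t.succ))))
      (condExp' n π Q 0 a fun v => ∑ t, g t (v t.succ)) 0 := by
    simp only [condExp'_eq_sum_div]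
    refine hasDerivAt_log_weightedMean_exp (c := ∑ t : Fin n, ℓ (t.1 + 1) 0 0)
      (sum_condWeight_pos hπ hQpos 0 a).ne'
      (fun v => HasDerivAt.fun_sum fun t _ => (hdiff _ (hIcc t) _ 0).hasDerivAt) fun v => ?_
    exact sum_congr rfl fun t _ => hℓ0 t (v t.succ)
  refine ((hlog 1).fun_sub (hlog 0)).congr_deriv ?_
  simp only [condExp'_sum, condExp'_comp_eval hπ hQpos, ← sum_sub_distrib]
  refine sum_congr rfl fun t _ => ?_
  rw [deriv_fun_sub (hdiff _ (hIcc t) 1 0) (hdiff _ (hIcc t) 0 0)]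
  ring

/-- Let `σ = (σ₀,…,σ_n)` be a binary Markov chain with everywhere
positive initial law `π` and strictly positive row-stochastic transition matrices
`Q_t`, and for `t = 1,…,n` let `ℓ t (ε, a)` be differentiable in `ε` with
`ℓ t (0,1) = ℓ t (0,0)`.  With `d_t(ε) = ℓ_t(ε,1) − ℓ_t(ε,0)`,
`S_n(ε) = ∑_{t=1}^n ℓ_t(ε, σ_t)` and
`λ_n(ε) = ln E[e^{S_n(ε)} | σ₀ = 1] − ln E[e^{S_n(ε)} | σ₀ = 0]`, the function `λ_n`
is differentiable at `0` with `λ_n'(0) = ∑_{t=1}^n D_{0t} d_t'(0)`. -/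
theorem stmt10 (n : ℕ) (π : Fin 2 → ℝ) (Q : ℕ → Fin 2 → Fin 2 → ℝ)
    (hπ : ∀ a, 0 < π a) (hπsum : π 0 + π 1 = 1)
    (hQpos : ∀ t a b, 0 < Q t a b) (hQrow : ∀ t a, Q t a 0 + Q t a 1 = 1)
    (ℓ : ℕ → ℝ → Fin 2 → ℝ)
    (hdiff : ∀ t ∈ Finset.Icc 1 n, ∀ a, Differentiable ℝ fun ε => ℓ t ε a)
    (h0 : ∀ t ∈ Finset.Icc 1 n, ℓ t 0 1 = ℓ t 0 0) :
    HasDerivAt (fun ε =>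
        Real.log (condExp' n π Q 0 1 fun v =>
          Real.exp (∑ t : Fin n, ℓ (t.1 + 1) ε (v t.succ))) -
        Real.log (condExp' n π Q 0 0 fun v =>
          Real.exp (∑ t : Fin n, ℓ (t.1 + 1) ε (v t.succ))))
      (∑ t : Fin n,
        (condProb n π Q 0 t.succ 1 1 - condProb n π Q 0 t.succ 0 1) *
          deriv (fun ε => ℓ (t.1 + 1) ε 1 - ℓ (t.1 + 1) ε 0) 0) 0 :=
  stmt10_general n π Q hπ hQpos ℓ hdiff h0
end

section
/- Let σ = (σ_0,…,σ_n) be a binary Markov chain as in the context, let 1 ≤ s < t ≤ n, and let g, h : {0,1} → ℝ be arbitrary functions with dg = g(1) − g(0) and dh = h(1) − h(0). Then Cov(g(σ_s), h(σ_t) | σ_0 = 1) − Cov(g(σ_s), h(σ_t) | σ_0 = 0) = D_{0s}[D_{st} P_{0s}(0,0) − D_{0t}] · dg · dh + [D_{0s} D_{st} g(0) − D_{0t} E(g(σ_s) | σ_0 = 0)] · dh. In particular, for 1 ≤ t ≤ n and g : {0,1} → ℝ, Var(g(σ_t) | σ_0 = 1) − Var(g(σ_t) | σ_0 = 0) = D_{0t}[P_{0t}(1,0)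 − P_{0t}(0,1)] (dg)^2. -/
/-- `D_{st} = P_{st}(1,1) − P_{st}(0,1)`. -/
noncomputable def Dst (n : ℕ) (π : Fin 2 → ℝ) (Q : ℕ → Fin 2 → Fin 2 → ℝ)
    (s t : Fin (n + 1)) : ℝ :=
  condProb n π Q s t 1 1 - condProb n π Q s t 0 1

/-- The conditional covariance `Cov(F, G | σ₀ = a)`. -/
noncomputable def condCov (n : ℕ) (π : Fin 2 → ℝ) (Q : ℕ → Fin 2 → Fin 2 → ℝ)
    (a : Fin 2) (F G : (Fin (n + 1) → Fin 2) → ℝ) : ℝ :=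
  condExp' n π Q 0 a (fun v => F v * G v) -
    condExp' n π Q 0 a F * condExp' n π Q 0 a G

/-!
Summing out the coordinates of a path one at a time, using that the rows of every `Q_t` sum
to `1`, shows that `(σ₀, σ_p, σ_q)` has joint law `π(a) P_{0p}(a,b) P_{pq}(b,c)`, where the
`P_{st}` are products of the transition matrices. So every conditional quantity in the
statement is an entry of, or a bilinear expression in, the `2 × 2` stochastic matrices
`A = P_{0s}` and `B = P_{st}` (with `P_{0t} = A B`), and the identity becomes a polynomial
identity once `A a 0 = 1 - A a 1` and `B b 0 = 1 - B b 1` are substituted.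
-/

open Finset Matrix

/-- `transitionMatrix Q s k = Q_{s+1} ⋯ Q_{s+k}`, the matrix `P_{s,s+k}` of the chain. -/
noncomputable def transitionMatrix (Q : ℕ → Fin 2 → Fin 2 → ℝ) (s : ℕ) :
    ℕ → Matrix (Fin 2) (Fin 2) ℝ
  | 0 => 1
  | k + 1 => transitionMatrix Q s k * of (Q (s + k + 1))

section TransitionMatrix

variable (Q : ℕ → Fin 2 → Fin 2 → ℝ)

theorem transitionMatrix_add (s k l : ℕ) :
    transitionMatrix Q s (k + l) = transitionMatrix Q s k * transitionMatrix Q (s + k) l := by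
  induction l with
  | zero => simp [transitionMatrix]
  | succ l ih => simp [← add_assoc, transitionMatrix, ih, Matrix.mul_assoc]

theorem transitionMatrix_eq_mul {k l : ℕ} (hkl : k ≤ l) (s : ℕ) :
    transitionMatrix Q s l = transitionMatrix Q s k * transitionMatrix Q (s + k) (l - k) := by
  rw [← transitionMatrix_add, Nat.add_sub_cancel' hkl]

theorem sum_transitionMatrix_apply (hQ : ∀ t a, ∑ b, Q t a b = 1) (s k : ℕ) (a : Fin 2) :
    ∑ b, transitionMatrix Q s k a b = 1 := by
  induction k generalizing a with
  | zero => simp [transitionMatrix, one_apply]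
  | succ k ih =>
    simp only [transitionMatrix, mul_apply, of_apply]
    rw [sum_comm]
    simp [← mul_sum, hQ, ih]

theorem transitionMatrix_apply_zero (hQ : ∀ t a, ∑ b, Q t a b = 1) (s k : ℕ) (a : Fin 2) :
    transitionMatrix Q s k a 0 = 1 - transitionMatrix Q s k a 1 := by
  rw [← sum_transitionMatrix_apply Q hQ s k a, Fin.sum_univ_two, add_sub_cancel_right]

theorem transitionMatrix_nonneg (hQ : ∀ t a b, 0 ≤ Q t a b) (s k : ℕ) (a b : Fin 2) :
    0 ≤ transitionMatrix Q s k a b := by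
  induction k generalizing b with
  | zero => simp only [transitionMatrix, one_apply]; positivity
  | succ k ih =>
    simp only [transitionMatrix, mul_apply, of_apply]
    exact sum_nonneg fun c _ => mul_nonneg (ih c) (hQ _ _ _)

theorem transitionMatrix_succ_pos (hQ : ∀ t a, ∑ b, Q t a b = 1)
    (hQpos : ∀ t a b, 0 < Q t a b) (s k : ℕ) (a b : Fin 2) :
    0 < transitionMatrix Q s (k + 1) a b := by
  have hK := transitionMatrix_nonneg Q (fun t a b => (hQpos t a b).le) s k a
  obtain ⟨c, -, hc⟩ : ∃ c ∈ univ, (0 : ℝ) < transitionMatrix Q s k a c :=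
    exists_lt_of_sum_lt (by simp [sum_transitionMatrix_apply Q hQ])
  calc 0 < transitionMatrix Q s k a c * Q (s + k + 1) c b := mul_pos hc (hQpos _ _ _)
    _ ≤ ∑ d, transitionMatrix Q s k a d * Q (s + k + 1) d b :=
      single_le_sum (f := fun d => transitionMatrix Q s k a d * Q (s + k + 1) d b)
        (fun d _ => mul_nonneg (hK d) (hQpos _ _ _).le) (mem_univ c)

end TransitionMatrix

theorem sum_fun_fin_succ_eq_sum_snoc {α M : Type*} [Fintype α] [AddCommMonoid M] {m : ℕ}
    (f : (Fin (m + 1) → α) → M) :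
    ∑ v, f v = ∑ u : Fin m → α, ∑ x, f (Fin.snoc u x) := by
  rw [← (Fin.snocEquiv fun _ => α).sum_comp, Fintype.sum_prod_type, sum_comm]
  rfl

section PathSums

variable (π : Fin 2 → ℝ) (Q : ℕ → Fin 2 → Fin 2 → ℝ)

theorem pathWeight_snoc (m : ℕ) (u : Fin (m + 1) → Fin 2) (x : Fin 2) :
    pathWeight (m + 1) π Q (Fin.snoc u x) = pathWeight m π Q u * Q (m + 1) (u (Fin.last m)) x := by
  have hsucc : ∀ i : Fin m, (Fin.snoc u x : Fin (m + 2) → Fin 2) i.castSucc.succ = u i.succ :=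
    fun i => by rw [Fin.succ_castSucc, Fin.snoc_castSucc]
  simp [pathWeight, Fin.prod_univ_castSucc, hsucc, mul_assoc]

theorem sum_pathWeight_mul_take {m n : ℕ} (hmn : m ≤ n)
    (Ψ : (Fin (m + 1) → Fin 2) → Fin 2 → ℝ) :
    ∑ v : Fin (n + 1) → Fin 2,
        pathWeight n π Q v * Ψ (Fin.take (m + 1) (by omega) v) (v (Fin.last n)) =
      ∑ u : Fin (m + 1) → Fin 2,
        pathWeight m π Q u * ∑ c, transitionMatrix Q m (n - m) (u (Fin.last m)) c * Ψ u c := by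
  induction n, hmn using Nat.le_induction generalizing Ψ with
  | base => simp [Fin.take_eq_self, transitionMatrix, one_apply]
  | succ n hmn ih =>
    have htake : ∀ (u : Fin (n + 1) → Fin 2) (x : Fin 2),
        Fin.take (m + 1) (by omega) (Fin.snoc u x : Fin (n + 2) → Fin 2) =
          Fin.take (m + 1) (by omega) u := fun u x => by
      rw [← Fin.take_init, Fin.init_snoc]
    have hk : n + 1 - m = n - m + 1 := by omega
    have hs : m + (n - m) + 1 = n + 1 := by omega
    rw [sum_fun_fin_succ_eq_sum_snoc]
    simp only [pathWeight_snoc, Fin.snoc_last, htake, mul_assoc, ← mul_sum]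
    rw [ih fun u c => ∑ x, Q (n + 1) c x * Ψ u x]
    simp only [hk, transitionMatrix, hs]
    refine sum_congr rfl fun u _ => congrArg _ ?_
    simp only [mul_apply, of_apply, mul_sum, sum_mul, mul_assoc]
    exact sum_comm

theorem sum_pathWeight_mul_comp_take (hQ : ∀ t a, ∑ b, Q t a b = 1) {m n : ℕ} (hmn : m ≤ n)
    (G : (Fin (m + 1) → Fin 2) → ℝ) :
    ∑ v : Fin (n + 1) → Fin 2, pathWeight n π Q v * G (Fin.take (m + 1) (by omega) v) =
      ∑ u : Fin (m + 1) → Fin 2, pathWeight m π Q u * G u := by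
  simpa [← sum_mul, sum_transitionMatrix_apply Q hQ] using
    sum_pathWeight_mul_take π Q hmn fun u _ => G u

theorem sum_pathWeight_mul_zero_last (n : ℕ) (Φ : Fin 2 → Fin 2 → ℝ) :
    ∑ v : Fin (n + 1) → Fin 2, pathWeight n π Q v * Φ (v 0) (v (Fin.last n)) =
      ∑ a, ∑ b, π a * transitionMatrix Q 0 n a b * Φ a b := by
  have := sum_pathWeight_mul_take π Q (Nat.zero_le n) fun u b => Φ (u 0) b
  simp only [Fin.take_apply, Fin.castLE_zero, Nat.sub_zero] at this
  rw [this, ← (Equiv.funUnique (Fin 1) (Fin 2)).symm.sum_comp]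
  simp [pathWeight, mul_add, mul_assoc]

theorem sum_pathWeight_mul_three (hQ : ∀ t a, ∑ b, Q t a b = 1) {n : ℕ} {p q : Fin (n + 1)}
    (hpq : p ≤ q) (φ : Fin 2 → Fin 2 → Fin 2 → ℝ) :
    ∑ v : Fin (n + 1) → Fin 2, pathWeight n π Q v * φ (v 0) (v p) (v q) =
      ∑ a, ∑ b, ∑ c,
        π a * transitionMatrix Q 0 p a b * transitionMatrix Q p (q - p) b c * φ a b c := by
  obtain ⟨p, hp⟩ := p
  obtain ⟨q, hq⟩ := q
  rw [Fin.mk_le_mk] at hpq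
  have htrunc := sum_pathWeight_mul_comp_take π Q hQ (m := q) (n := n) (by omega)
    fun u => φ (u 0) (u ⟨p, by omega⟩) (u (Fin.last q))
  have hmid := sum_pathWeight_mul_take π Q hpq fun u c => φ (u 0) (u (Fin.last p)) c
  have hlast : ∀ {k m : ℕ} (h : k + 1 ≤ m + 1), Fin.castLE h (Fin.last k) = ⟨k, by omega⟩ :=
    fun _ => rfl
  simp only [Fin.take_apply, Fin.castLE_zero, Fin.castLE_mk, hlast] at htrunc hmid
  rw [htrunc, hmid, sum_pathWeight_mul_zero_last π Q p fun a b =>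
    ∑ c, transitionMatrix Q p (q - p) b c * φ a b c]
  simp only [mul_sum, mul_assoc]

theorem sum_ite_zero_eq_pathWeight_mul (hQ : ∀ t a, ∑ b, Q t a b = 1) {n : ℕ} (a : Fin 2)
    {p q : Fin (n + 1)} (hpq : p ≤ q) (ψ : Fin 2 → Fin 2 → ℝ) :
    ∑ v : Fin (n + 1) → Fin 2,
        (if v 0 = a then pathWeight n π Q v * ψ (v p) (v q) else 0) =
      π a * ∑ b, ∑ c, transitionMatrix Q 0 p a b * transitionMatrix Q p (q - p) b c * ψ b c := by
  simp only [← mul_ite_zero]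
  rw [sum_pathWeight_mul_three π Q hQ hpq fun a' b c => if a' = a then ψ b c else 0]
  simp only [mul_ite, mul_zero, sum_ite_irrel, sum_const_zero, sum_ite_eq', mem_univ, if_true,
    mul_sum, mul_assoc]

theorem sum_ite_eq_pathWeight_mul (hQ : ∀ t a, ∑ b, Q t a b = 1) {n : ℕ}
    {p q : Fin (n + 1)} (hpq : p ≤ q) (b : Fin 2) (ψ : Fin 2 → ℝ) :
    ∑ v : Fin (n + 1) → Fin 2, (if v p = b then pathWeight n π Q v * ψ (v q) else 0) =
      (∑ a, π a * transitionMatrix Q 0 p a b) * ∑ c, transitionMatrix Q p (q - p) b c * ψ c := by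
  simp only [← mul_ite_zero]
  rw [sum_pathWeight_mul_three π Q hQ hpq fun _ b' c => if b' = b then ψ c else 0]
  simp only [mul_ite, mul_zero, sum_ite_irrel, sum_const_zero, sum_ite_eq', mem_univ, if_true,
    sum_mul_sum, mul_assoc]

end PathSums

section Conditioning

variable (π : Fin 2 → ℝ) (Q : ℕ → Fin 2 → Fin 2 → ℝ) (hQ : ∀ t a, ∑ b, Q t a b = 1)
include hQ

theorem condExp'_zero_apply₂ {n : ℕ} {a : Fin 2} (ha : π a ≠ 0) {p q : Fin (n + 1)} (hpq : p ≤ q)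
    (ψ : Fin 2 → Fin 2 → ℝ) :
    condExp' n π Q 0 a (fun v => ψ (v p) (v q)) =
      ∑ b, ∑ c, transitionMatrix Q 0 p a b * transitionMatrix Q p (q - p) b c * ψ b c := by
  have hden : ∑ v : Fin (n + 1) → Fin 2, (if v 0 = a then pathWeight n π Q v else 0) = π a := by
    simpa [← mul_sum, sum_transitionMatrix_apply Q hQ] using
      sum_ite_zero_eq_pathWeight_mul π Q hQ a hpq fun _ _ => 1
  rw [condExp', sum_ite_zero_eq_pathWeight_mul π Q hQ a hpq, hden, mul_div_cancel_left₀ _ ha]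

theorem condExp'_zero_apply {n : ℕ} {a : Fin 2} (ha : π a ≠ 0) (p : Fin (n + 1))
    (f : Fin 2 → ℝ) :
    condExp' n π Q 0 a (fun v => f (v p)) = ∑ b, transitionMatrix Q 0 p a b * f b := by
  simpa [transitionMatrix, one_apply] using
    condExp'_zero_apply₂ π Q hQ ha (le_refl p) fun b _ => f b

theorem condProb_zero_eq_transitionMatrix {n : ℕ} {a : Fin 2} (ha : π a ≠ 0) (p : Fin (n + 1))
    (b : Fin 2) :
    condProb n π Q 0 p a b = transitionMatrix Q 0 p a b := by
  simpa [condProb] using condExp'_zero_apply π Q hQ ha p fun x => if x = b then 1 else 0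

theorem condExp'_apply_eq_of_ne_zero {n : ℕ} {p q : Fin (n + 1)} (hpq : p ≤ q) {b : Fin 2}
    (hb : ∑ a, π a * transitionMatrix Q 0 p a b ≠ 0) (ψ : Fin 2 → ℝ) :
    condExp' n π Q p b (fun v => ψ (v q)) = ∑ c, transitionMatrix Q p (q - p) b c * ψ c := by
  have hden : ∑ v : Fin (n + 1) → Fin 2, (if v p = b then pathWeight n π Q v else 0) =
      ∑ a, π a * transitionMatrix Q 0 p a b := by
    simpa [sum_transitionMatrix_apply Q hQ] using
      sum_ite_eq_pathWeight_mul π Q hQ hpq b fun _ => 1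
  rw [condExp', sum_ite_eq_pathWeight_mul π Q hQ hpq, hden, mul_div_cancel_left₀ _ hb]

theorem condProb_eq_transitionMatrix_of_pos (hπ : ∀ a, 0 < π a) (hQpos : ∀ t a b, 0 < Q t a b)
    {n : ℕ} {p q : Fin (n + 1)} (hp : 0 < (p : ℕ)) (hpq : p ≤ q) (b c : Fin 2) :
    condProb n π Q p q b c = transitionMatrix Q p (q - p) b c := by
  obtain ⟨k, hk⟩ := Nat.exists_eq_add_one_of_ne_zero hp.ne'
  have hb : ∑ a, π a * transitionMatrix Q 0 p a b ≠ 0 := by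
    refine (sum_pos (fun a _ => mul_pos (hπ a) ?_) univ_nonempty).ne'
    exact hk ▸ transitionMatrix_succ_pos Q hQ hQpos 0 k a b
  simpa [condProb] using condExp'_apply_eq_of_ne_zero π Q hQ hpq hb fun x => if x = c then 1 else 0

end Conditioning

theorem stmt12_general (n : ℕ) (π : Fin 2 → ℝ) (Q : ℕ → Fin 2 → Fin 2 → ℝ)
    (hπ : ∀ a, 0 < π a)
    (hQpos : ∀ t a b, 0 < Q t a b) (hQrow : ∀ t a, Q t a 0 + Q t a 1 = 1) :
    (∀ s t : Fin n, s < t → ∀ g h : Fin 2 → ℝ,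
      condCov n π Q 1 (fun v => g (v s.succ)) (fun v => h (v t.succ)) -
          condCov n π Q 0 (fun v => g (v s.succ)) (fun v => h (v t.succ)) =
        Dst n π Q 0 s.succ *
            (Dst n π Q s.succ t.succ * condProb n π Q 0 s.succ 0 0 -
              Dst n π Q 0 t.succ) * (g 1 - g 0) * (h 1 - h 0) +
          (Dst n π Q 0 s.succ * Dst n π Q s.succ t.succ * g 0 -
              Dst n π Q 0 t.succ * condExp' n π Q 0 0 fun v => g (v s.succ)) *
            (h 1 - h 0)) ∧
    ∀ t : Fin n, ∀ g : Fin 2 → ℝ,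
      condCov n π Q 1 (fun v => g (v t.succ)) (fun v => g (v t.succ)) -
          condCov n π Q 0 (fun v => g (v t.succ)) (fun v => g (v t.succ)) =
        Dst n π Q 0 t.succ *
          (condProb n π Q 0 t.succ 1 0 - condProb n π Q 0 t.succ 0 1) *
          (g 1 - g 0) ^ 2 := by
  have hQ : ∀ t a, ∑ b, Q t a b = 1 := fun t a => by rw [Fin.sum_univ_two]; exact hQrow t a
  have hπ0 : ∀ a, π a ≠ 0 := fun a => (hπ a).ne'
  refine ⟨fun s t hst g h => ?_, fun t g => ?_⟩
  · have hle : s.succ ≤ t.succ := Fin.succ_le_succ_iff.2 hst.le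
    have hCK := transitionMatrix_eq_mul Q (Fin.le_iff_val_le_val.1 hle) 0
    rw [zero_add] at hCK
    simp only [condCov, Dst, condExp'_zero_apply₂ π Q hQ (hπ0 _) hle fun b c => g b * h c,
      condExp'_zero_apply π Q hQ (hπ0 _) s.succ g, condExp'_zero_apply π Q hQ (hπ0 _) t.succ h,
      condProb_zero_eq_transitionMatrix π Q hQ (hπ0 _), hCK,
      condProb_eq_transitionMatrix_of_pos π Q hQ hπ hQpos (Nat.succ_pos s) hle]
    simp only [Fin.sum_univ_two, mul_apply, transitionMatrix_apply_zero Q hQ]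
    ring
  · simp only [condCov, Dst, condExp'_zero_apply π Q hQ (hπ0 _) t.succ g,
      condExp'_zero_apply π Q hQ (hπ0 _) t.succ fun x => g x * g x,
      condProb_zero_eq_transitionMatrix π Q hQ (hπ0 _)]
    simp only [Fin.sum_univ_two, transitionMatrix_apply_zero Q hQ]
    ring

/-- For a binary Markov chain `σ = (σ₀,…,σ_n)` as above,
`1 ≤ s < t ≤ n`, and arbitrary `g, h : {0,1} → ℝ` (with `dg = g 1 − g 0`,
`dh = h 1 − h 0`),
`Cov(g(σ_s), h(σ_t) | σ₀=1) − Cov(g(σ_s), h(σ_t) | σ₀=0) =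
  D_{0s}[D_{st} P_{0s}(0,0) − D_{0t}] dg dh +
  [D_{0s} D_{st} g(0) − D_{0t} E(g(σ_s)|σ₀=0)] dh`;
in particular, for `1 ≤ t ≤ n`,
`Var(g(σ_t)|σ₀=1) − Var(g(σ_t)|σ₀=0) = D_{0t}[P_{0t}(1,0) − P_{0t}(0,1)] dg²`. -/
theorem stmt12 (n : ℕ) (π : Fin 2 → ℝ) (Q : ℕ → Fin 2 → Fin 2 → ℝ)
    (hπ : ∀ a, 0 < π a) (hπsum : π 0 + π 1 = 1)
    (hQpos : ∀ t a b, 0 < Q t a b) (hQrow : ∀ t a, Q t a 0 + Q t a 1 = 1) :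
    (∀ s t : Fin n, s < t → ∀ g h : Fin 2 → ℝ,
      condCov n π Q 1 (fun v => g (v s.succ)) (fun v => h (v t.succ)) -
          condCov n π Q 0 (fun v => g (v s.succ)) (fun v => h (v t.succ)) =
        Dst n π Q 0 s.succ *
            (Dst n π Q s.succ t.succ * condProb n π Q 0 s.succ 0 0 -
              Dst n π Q 0 t.succ) * (g 1 - g 0) * (h 1 - h 0) +
          (Dst n π Q 0 s.succ * Dst n π Q s.succ t.succ * g 0 -
              Dst n π Q 0 t.succ * condExp' n π Q 0 0 fun v => g (v s.succ)) *
            (h 1 - h 0)) ∧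
    ∀ t : Fin n, ∀ g : Fin 2 → ℝ,
      condCov n π Q 1 (fun v => g (v t.succ)) (fun v => g (v t.succ)) -
          condCov n π Q 0 (fun v => g (v t.succ)) (fun v => g (v t.succ)) =
        Dst n π Q 0 t.succ *
          (condProb n π Q 0 t.succ 1 0 - condProb n π Q 0 t.succ 0 1) *
          (g 1 - g 0) ^ 2 :=
  stmt12_general n π Q hπ hQpos hQrow
end

section
/- Let n ≥ 1, let q_1,…,q_n ∈ [0,1], and let α ∈ (0,1). Let q_(1) ≤ q_(2) ≤ … ≤ q_(n) be the values sorted in nondecreasing order, and let r = max{ j ∈ {0,1,…,n} : q_(1)+⋯+q_(j) ≤ αj } (with the convention that the empty sum is 0, so r ≥ 0 is well defined). Then for every subset S ⊆ {1,…,n} satisfying Σ_{i∈S} q_i ≤ α·#S, one has #S − Σ_{i∈S} q_i ≤ r − (q_(1)+⋯+q_(r)). In particular, any set consisting of indices realizing the r smallest values q_(1),…,q_(r) satisfies the constraint and attains the maximum of #S − Σ_{i∈S} q_i over all subsets S with Σ_{i∈S} q_i ≤ α·#S. -/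
/-!
Among the subsets of a given size `k`, the indices of the `k` smallest values minimize the sum,
so a feasible `S` with `#S = k` forces `F k ≤ α k`, hence `k ≤ r`. As every `q i ≤ 1`, the map
`j ↦ j - F j` is nondecreasing, whence `#S - ∑_{i∈S} q i ≤ k - F k ≤ r - F r`.
-/

open Finset

lemma Fin.val_le_of_strictMono {k n : ℕ} {e : Fin k → Fin n} (he : StrictMono e) (i : Fin k) :
    (i : ℕ) ≤ e i := by
  simpa using card_le_card_of_injOn e (fun j hj => by simpa using he (mem_Iio.1 hj))
    he.injective.injOn (s := Iio i) (t := Iio (e i))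

lemma Fin.filter_val_lt_eq_map_castLEEmb {k n : ℕ} (hk : k ≤ n) :
    univ.filter (fun i : Fin n => (i : ℕ) < k) = univ.map (Fin.castLEEmb hk) := by
  ext i
  simp only [mem_filter, mem_univ, true_and, mem_map, Fin.coe_castLEEmb]
  exact ⟨fun h => ⟨⟨i, h⟩, rfl⟩, by rintro ⟨j, rfl⟩; exact j.isLt⟩

def prefixSum {M : Type*} [AddCommMonoid M] {n : ℕ} (f : Fin n → M) (j : ℕ) : M :=
  ∑ i : Fin n, if (i : ℕ) < j then f i else 0

section
variable {M : Type*} [AddCommMonoid M] {n : ℕ}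

lemma prefixSum_eq_sum_filter (f : Fin n → M) (j : ℕ) :
    prefixSum f j = ∑ i ∈ univ.filter (fun i : Fin n => (i : ℕ) < j), f i :=
  (sum_filter _ _).symm

lemma prefixSum_succ (f : Fin n → M) (j : ℕ) :
    prefixSum f (j + 1) = prefixSum f j + if h : j < n then f ⟨j, h⟩ else 0 := by
  simp only [prefixSum_eq_sum_filter]
  split_ifs with h
  · have hfilter : univ.filter (fun i : Fin n => (i : ℕ) < j + 1)
        = insert ⟨j, h⟩ (univ.filter fun i : Fin n => (i : ℕ) < j) := by
      ext i; simp only [mem_filter, mem_univ, true_and, mem_insert, Fin.ext_iff]; omega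
    rw [hfilter, sum_insert (by simp), add_comm]
  · have hall : ∀ m ≥ n, univ.filter (fun i : Fin n => (i : ℕ) < m) = univ := fun m hm => by
      ext i; simpa using i.isLt.trans_le hm
    rw [hall j (by omega), hall (j + 1) (by omega), add_zero]

lemma prefixSum_card_le_sum [PartialOrder M] [IsOrderedAddMonoid M] {f : Fin n → M}
    (hf : Monotone f) (A : Finset (Fin n)) : prefixSum f #A ≤ ∑ i ∈ A, f i := by
  have hA : #A ≤ n := by simpa using card_le_univ A
  set e := A.orderEmbOfFin rfl
  calc prefixSum f #A = ∑ i : Fin #A, f (Fin.castLE hA i) := by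
        rw [prefixSum_eq_sum_filter, Fin.filter_val_lt_eq_map_castLEEmb hA, sum_map]; rfl
    _ ≤ ∑ i : Fin #A, f (e i) :=
        sum_le_sum fun i _ => hf (Fin.le_def.2 (Fin.val_le_of_strictMono e.strictMono i))
    _ = ∑ i ∈ A, f i := by
        rw [← sum_coe_sort A]
        exact Fintype.sum_equiv (A.orderIsoOfFin rfl).toEquiv _ _ fun _ => rfl

lemma prefixSum_comp_perm_card_le_sum [PartialOrder M] [IsOrderedAddMonoid M]
    (σ : Equiv.Perm (Fin n)) {f : Fin n → M} (hf : Monotone (f ∘ σ)) (S : Finset (Fin n)) :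
    prefixSum (f ∘ σ) #S ≤ ∑ i ∈ S, f i := by
  simpa [sum_map] using prefixSum_card_le_sum hf (S.map σ.symm.toEmbedding)

lemma card_image_perm_filter_val_lt (σ : Equiv.Perm (Fin n)) {k : ℕ} (hk : k ≤ n) :
    #((univ.filter fun j : Fin n => (j : ℕ) < k).image σ) = k := by
  rw [card_image_of_injective _ σ.injective, Fin.card_filter_val_lt, min_eq_right hk]

lemma sum_image_perm_filter_val_lt (σ : Equiv.Perm (Fin n)) (f : Fin n → M) (k : ℕ) :
    ∑ i ∈ (univ.filter fun j : Fin n => (j : ℕ) < k).image σ, f i = prefixSum (f ∘ σ) k := by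
  rw [sum_image fun _ _ _ _ h => σ.injective h, prefixSum_eq_sum_filter]
  rfl

end

lemma monotone_natCast_sub_prefixSum {n : ℕ} {f : Fin n → ℝ} (hf : ∀ i, f i ≤ 1) :
    Monotone fun j : ℕ => (j : ℝ) - prefixSum f j := by
  refine monotone_nat_of_le_succ fun j => ?_
  rw [prefixSum_succ]
  split_ifs with h
  · push_cast; linarith [hf ⟨j, h⟩]
  · push_cast; linarith

theorem stmt14_general (n : ℕ) (q : Fin n → ℝ)
    (hq : ∀ i, q i ∈ Set.Icc (0 : ℝ) 1) (α : ℝ)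
    (σ : Equiv.Perm (Fin n)) (hσ : Monotone fun i => q (σ i))
    (F : ℕ → ℝ) (hF : ∀ j, F j = ∑ i : Fin n, if (i : ℕ) < j then q (σ i) else 0)
    (r : ℕ) (hrn : r ≤ n) (hrle : F r ≤ α * r)
    (hrmax : ∀ j, j ≤ n → F j ≤ α * j → j ≤ r) :
    (∀ S : Finset (Fin n), (∑ i ∈ S, q i) ≤ α * S.card →
      (S.card : ℝ) - ∑ i ∈ S, q i ≤ (r : ℝ) - F r) ∧
    (∑ i ∈ (Finset.univ.filter fun j : Fin n => (j : ℕ) < r).image σ, q i) ≤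
        α * ((Finset.univ.filter fun j : Fin n => (j : ℕ) < r).image σ).card ∧
    (((Finset.univ.filter fun j : Fin n => (j : ℕ) < r).image σ).card : ℝ) -
        ∑ i ∈ (Finset.univ.filter fun j : Fin n => (j : ℕ) < r).image σ, q i =
      (r : ℝ) - F r := by
  obtain rfl : F = prefixSum (q ∘ σ) := funext hF
  rw [sum_image_perm_filter_val_lt, card_image_perm_filter_val_lt σ hrn]
  refine ⟨fun S hS => ?_, hrle, rfl⟩
  have hsorted := prefixSum_comp_perm_card_le_sum σ hσ S
  have hSr : #S ≤ r := hrmax _ (by simpa using card_le_univ S) (hsorted.trans hS)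
  have hgain := monotone_natCast_sub_prefixSum (f := q ∘ σ) (fun i => (hq (σ i)).2) hSr
  linarith

/-- Let `n ≥ 1`, `q₁,…,q_n ∈ [0,1]`, `α ∈ (0,1)`.  Let `σ` be a
permutation sorting the `q_i` in nondecreasing order, `F j = q_(1) + ⋯ + q_(j)` the
partial sums of the sorted values, and `r = max{ j ≤ n : F j ≤ α j }`.  Then every
subset `S ⊆ {1,…,n}` with `∑_{i∈S} q i ≤ α · #S` satisfies
`#S − ∑_{i∈S} q i ≤ r − F r`; and the set of indices realizing the `r` smallest
values satisfies the constraint and attains this maximum. -/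
theorem stmt14 (n : ℕ) (hn : 1 ≤ n) (q : Fin n → ℝ)
    (hq : ∀ i, q i ∈ Set.Icc (0 : ℝ) 1) (α : ℝ) (hα : α ∈ Set.Ioo (0 : ℝ) 1)
    (σ : Equiv.Perm (Fin n)) (hσ : Monotone fun i => q (σ i))
    (F : ℕ → ℝ) (hF : ∀ j, F j = ∑ i : Fin n, if (i : ℕ) < j then q (σ i) else 0)
    (r : ℕ) (hrn : r ≤ n) (hrle : F r ≤ α * r)
    (hrmax : ∀ j, j ≤ n → F j ≤ α * j → j ≤ r) :
    (∀ S : Finset (Fin n), (∑ i ∈ S, q i) ≤ α * S.card →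
      (S.card : ℝ) - ∑ i ∈ S, q i ≤ (r : ℝ) - F r) ∧
    (∑ i ∈ (Finset.univ.filter fun j : Fin n => (j : ℕ) < r).image σ, q i) ≤
        α * ((Finset.univ.filter fun j : Fin n => (j : ℕ) < r).image σ).card ∧
    (((Finset.univ.filter fun j : Fin n => (j : ℕ) < r).image σ).card : ℝ) -
        ∑ i ∈ (Finset.univ.filter fun j : Fin n => (j : ℕ) < r).image σ, q i =
      (r : ℝ) - F r :=
  stmt14_general n q hq α σ hσ F hF r hrn hrle hrmax
end

section
/- Let Z be a real random variable on a probability space, let φ : ℝ × ℝ → ℝ with v ↦ φ(z,v) differentiable, and let f : ℝ × ℝ → (0,∞) be such that for each v, the law of φ(Z,v) has density x ↦ f(x,v) with respect to Lebesgue measure. Let λ(x,θ) = ln f(x,θ) be twice continuously differentiable, and set s(x) = (∂λ/∂θ)(x,0) and X = φ(Z,0). Assume: (i) the map v ↦ E[s(φ(Z,v))] is differentiable at v = 0 with derivative E[(∂²λ/∂x∂θ)(X,0) · (∂φ/∂v)(Z,0)] (interchange of differentiation and expectation is valid); (ii) the map v ↦ ∫ s(x) f(x,v) dx is differentiable at v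 = 0 with derivative ∫ s(x) (∂f/∂θ)(x,0) dx (differentiation under the integral sign is valid), and all displayed integrals are finite. Then E[(∂²λ/∂x∂θ)(X,0) · (∂φ/∂v)(Z,0)] = ∫ ((∂f/∂θ)(x,0))² / f(x,0) dx, the Fisher information J(0) of the parametric family f(·,θ) at θ = 0. -/
open MeasureTheory

/-! Both hypotheses (i) and (ii) differentiate the same function of `v`: since `f(·,v)` is the
density of `φ(Z,v)`, the change of variables formula gives `E[s(φ(Z,v))] = ∫ s(x) f(x,v) dx`
for every `v`. Uniqueness of derivatives identifies the left-hand side of the claim with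
`∫ s(x) (∂f/∂θ)(x,0) dx`, and `s = (∂f/∂θ)(·,0) / f(·,0)` turns this integrand into the Fisher
integrand. -/

section ChangeOfVariables

variable {Ω α : Type*} [MeasurableSpace Ω] [MeasurableSpace α] {μ : Measure Ω} {ν : Measure α}

theorem integral_comp_eq_integral_mul_of_map_eq_withDensity [NeZero ν] {g : Ω → α}
    {d s : α → ℝ} (hmap : μ.map g = ν.withDensity fun x => ENNReal.ofReal (d x))
    (hd : Measurable d) (hd_pos : ∀ x, 0 < d x) (hs : AEStronglyMeasurable s ν) :
    ∫ ω, s (g ω) ∂μ = ∫ x, s x * d x ∂ν := by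
  have hd' : Measurable fun x => ENNReal.ofReal (d x) := ENNReal.measurable_ofReal.comp hd
  have hmap_ne_zero : μ.map g ≠ 0 := by
    rw [hmap, Ne, withDensity_eq_zero_iff hd'.aemeasurable]
    intro h
    obtain ⟨x, hx⟩ := h.exists
    exact (ENNReal.ofReal_pos.mpr (hd_pos x)).ne' hx
  have hs_map : AEStronglyMeasurable s (μ.map g) :=
    hmap ▸ hs.mono_ac (withDensity_absolutelyContinuous _ _)
  calc ∫ ω, s (g ω) ∂μ = ∫ x, s x ∂(μ.map g) :=
        (integral_map (.of_map_ne_zero hmap_ne_zero) hs_map).symm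
    _ = ∫ x, (ENNReal.ofReal (d x)).toReal • s x ∂ν := by
        rw [hmap, integral_withDensity_eq_integral_toReal_smul hd'
          (.of_forall fun _ => ENNReal.ofReal_lt_top)]
    _ = ∫ x, s x * d x ∂ν := by
        simp only [ENNReal.toReal_ofReal (hd_pos _).le, smul_eq_mul, mul_comm]

end ChangeOfVariables

theorem ContDiff.continuous_deriv_of_uncurry {𝕜 E G : Type*} [NontriviallyNormedField 𝕜]
    [NormedAddCommGroup E] [NormedSpace 𝕜 E] [NormedAddCommGroup G] [NormedSpace 𝕜 G]
    {F : E → 𝕜 → G} (hF : ContDiff 𝕜 1 (Function.uncurry F)) (t : 𝕜) :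
    Continuous fun x => deriv (F x) t := by
  have hderiv : ∀ x, deriv (F x) t = fderiv 𝕜 (Function.uncurry F) (x, t) (0, 1) := fun x =>
    (((hF.differentiable one_ne_zero) (x, t)).hasFDerivAt.comp_hasDerivAt t
      ((hasDerivAt_const t x).prodMk (hasDerivAt_id t))).deriv
  simp only [hderiv]
  exact ((hF.continuous_fderiv one_ne_zero).comp (.prodMk_left t)).clm_apply continuous_const

theorem deriv_log_mul_deriv {g : ℝ → ℝ} {t : ℝ} (hg : g t ≠ 0) :
    deriv (fun t => Real.log (g t)) t * deriv g t = deriv g t ^ 2 / g t := by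
  by_cases hdiff : DifferentiableAt ℝ g t
  · rw [deriv.log hdiff hg]
    ring
  · simp [deriv_zero_of_not_differentiableAt hdiff]

theorem stmt17_general {Ω : Type*} [MeasurableSpace Ω] (μ : Measure Ω)
    (Z : Ω → ℝ)
    (phi : ℝ → ℝ → ℝ)
    (f : ℝ → ℝ → ℝ) (hf : ∀ x v, 0 < f x v)
    (hdens : ∀ v, Measure.map (fun ω => phi (Z ω) v) μ =
      MeasureTheory.volume.withDensity fun x => ENNReal.ofReal (f x v))
    (hlam : ContDiff ℝ 2 (Function.uncurry fun x th => Real.log (f x th)))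
    (hi : HasDerivAt
      (fun v => ∫ ω, deriv (fun th => Real.log (f (phi (Z ω) v) th)) 0 ∂μ)
      (∫ ω, deriv (fun x => deriv (fun th => Real.log (f x th)) 0) (phi (Z ω) 0) *
        deriv (phi (Z ω)) 0 ∂μ) 0)
    (hii : HasDerivAt
      (fun v => ∫ x, deriv (fun th => Real.log (f x th)) 0 * f x v)
      (∫ x, deriv (fun th => Real.log (f x th)) 0 * deriv (fun th => f x th) 0) 0) :
    ∫ ω, deriv (fun x => deriv (fun th => Real.log (f x th)) 0) (phi (Z ω) 0) *
        deriv (phi (Z ω)) 0 ∂μ =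
      ∫ x, (deriv (fun th => f x th) 0) ^ 2 / f x 0 := by
  have hs : Continuous fun x => deriv (fun th => Real.log (f x th)) 0 :=
    (hlam.of_le (by norm_num)).continuous_deriv_of_uncurry 0
  have hf_cont : ∀ v, Continuous fun x => f x v := fun v => by
    simpa only [Function.comp_def, Function.uncurry_apply_pair, Real.exp_log (hf _ v)] using
      (hlam.continuous.comp (.prodMk_left v)).rexp
  have hchange : ∀ v, ∫ ω, deriv (fun th => Real.log (f (phi (Z ω) v) th)) 0 ∂μ =
      ∫ x, deriv (fun th => Real.log (f x th)) 0 * f x v := fun v =>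
    integral_comp_eq_integral_mul_of_map_eq_withDensity (hdens v) (hf_cont v).measurable
      (hf · v) hs.aestronglyMeasurable
  rw [funext hchange] at hi
  rw [hi.unique hii]
  exact integral_congr_ae (.of_forall fun x => deriv_log_mul_deriv (hf x 0).ne')

/-- Let `Z` be a real random variable, `φ(z,·)` differentiable,
`f(·,v) > 0` a density of the law of `φ(Z,v)` for each `v`, and
`λ(x,θ) = ln f(x,θ)` twice continuously differentiable; set
`s(x) = (∂λ/∂θ)(x,0)` and `X = φ(Z,0)`.  Assuming the interchanges of differentiation
with expectation (i) and with the integral (ii) are valid, and that the displayed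
integrals are finite, one has
`E[(∂²λ/∂x∂θ)(X,0) · (∂φ/∂v)(Z,0)] = ∫ ((∂f/∂θ)(x,0))² / f(x,0) dx = J(0)`,
the Fisher information of the family `f(·,θ)` at `θ = 0`. -/
theorem stmt17 {Ω : Type*} [MeasurableSpace Ω] (μ : Measure Ω)
    [IsProbabilityMeasure μ]
    (Z : Ω → ℝ) (hZ : Measurable Z)
    (phi : ℝ → ℝ → ℝ) (hphi : ∀ z, Differentiable ℝ (phi z))
    (f : ℝ → ℝ → ℝ) (hf : ∀ x v, 0 < f x v)
    (hdens : ∀ v, Measure.map (fun ω => phi (Z ω) v) μ =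
      MeasureTheory.volume.withDensity fun x => ENNReal.ofReal (f x v))
    (hlam : ContDiff ℝ 2 (Function.uncurry fun x th => Real.log (f x th)))
    (hi : HasDerivAt
      (fun v => ∫ ω, deriv (fun th => Real.log (f (phi (Z ω) v) th)) 0 ∂μ)
      (∫ ω, deriv (fun x => deriv (fun th => Real.log (f x th)) 0) (phi (Z ω) 0) *
        deriv (phi (Z ω)) 0 ∂μ) 0)
    (hii : HasDerivAt
      (fun v => ∫ x, deriv (fun th => Real.log (f x th)) 0 * f x v)
      (∫ x, deriv (fun th => Real.log (f x th)) 0 * deriv (fun th => f x th) 0) 0)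
    (hint1 : Integrable (fun ω =>
      deriv (fun x => deriv (fun th => Real.log (f x th)) 0) (phi (Z ω) 0) *
        deriv (phi (Z ω)) 0) μ)
    (hint2 : Integrable fun x =>
      deriv (fun th => Real.log (f x th)) 0 * deriv (fun th => f x th) 0)
    (hint3 : Integrable fun x => (deriv (fun th => f x th) 0) ^ 2 / f x 0) :
    ∫ ω, deriv (fun x => deriv (fun th => Real.log (f x th)) 0) (phi (Z ω) 0) *
        deriv (phi (Z ω)) 0 ∂μ =
      ∫ x, (deriv (fun th => f x th) 0) ^ 2 / f x 0 :=
  stmt17_general μ Z phi f hf hdens hlam hi hii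
end
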